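/- arXiv:1305.4814 — 9 statements merged into one kernel-verified Lean document; each statement's English description precedes it below -/
import Mathlib

section
/- There is no regular convex cone K ⊆ ℝ³ that is invariant under the one-parameter group generated by the matrix A = [[0,1,0],[0,0,0],[0,0,0]], i.e., no regular convex cone K satisfies exp(tA)[K] = K for all t ∈ ℝ, where exp(tA) is the shear map (x₁,x₂,x₃) ↦ (x₁ + t x₂, x₂, x₃). -/
open Set

/-- A regular convex cone: closed, convex, invariant under positive scalings,
with nonempty interior, containing no line (pointed). -/
def IsRegularCone {n : ℕ} (K : Set (Fin n → ℝ)) : Prop :=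
  IsClosed K ∧ Convex ℝ K ∧ (∀ c : ℝ, 0 < c → ∀ x ∈ K, c • x ∈ K) ∧
    (interior K).Nonempty ∧ ∀ x ∈ K, -x ∈ K → x = 0

open Filter in
/-- Auxiliary: taking the limit of scaled shears, `(ε * x 1, 0, 0)` lies in an
invariant cone `K` for `ε = ±1` and `x ∈ K`. -/
lemma aux_limit_mem {K : Set (Fin 3 → ℝ)} (hclosed : IsClosed K)
    (hscale : ∀ c : ℝ, 0 < c → ∀ x ∈ K, c • x ∈ K)
    (hinv : ∀ t : ℝ, (fun v : Fin 3 → ℝ => ![v 0 + t * v 1, v 1, v 2]) '' K = K)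
    {x : Fin 3 → ℝ} (hx : x ∈ K) (ε : ℝ) :
    ![ε * x 1, 0, 0] ∈ K := by
  set g : ℕ → Fin 3 → ℝ := fun n =>
    (((n:ℝ)+1)⁻¹) • ![x 0 + (ε * ((n:ℝ)+1)) * x 1, x 1, x 2] with hg
  have hpos : ∀ n : ℕ, (0:ℝ) < (n:ℝ)+1 := fun n => by positivity
  have hmem : ∀ n : ℕ, g n ∈ K := by
    intro n
    apply hscale _ (by positivity)
    have h := hinv (ε * ((n:ℝ)+1))
    rw [← h]
    exact Set.mem_image_of_mem _ hx
  have hzero : Tendsto (fun n : ℕ => ((n:ℝ)+1)⁻¹) atTop (nhds 0) :=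
    ((tendsto_natCast_atTop_atTop (R := ℝ)).atTop_add
      tendsto_const_nhds).inv_tendsto_atTop
  have htend : Tendsto g atTop (nhds ![ε * x 1, 0, 0]) := by
    rw [tendsto_pi_nhds]
    intro i
    fin_cases i
    · have heq : ∀ n : ℕ, g n 0 = ((n:ℝ)+1)⁻¹ * x 0 + ε * x 1 := by
        intro n
        have hne : ((n:ℝ)+1) ≠ 0 := (hpos n).ne'
        simp only [hg, Pi.smul_apply, Matrix.cons_val_zero, smul_eq_mul]
        field_simp
      refine Filter.Tendsto.congr (fun n => (heq n).symm) ?_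
      simpa using (hzero.mul_const (x 0)).add (tendsto_const_nhds (x := ε * x 1))
    · have heq : ∀ n : ℕ, g n 1 = ((n:ℝ)+1)⁻¹ * x 1 := by
        intro n
        simp [hg]
      refine Filter.Tendsto.congr (fun n => (heq n).symm) ?_
      simpa using hzero.mul_const (x 1)
    · have heq : ∀ n : ℕ, g n 2 = ((n:ℝ)+1)⁻¹ * x 2 := by
        intro n
        simp [hg]
      refine Filter.Tendsto.congr (fun n => (heq n).symm) ?_
      simpa using hzero.mul_const (x 2)
  exact hclosed.mem_of_tendsto htend (Filter.Eventually.of_forall hmem)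

/-- no regular convex cone in ℝ³ is invariant under the one-parameter
group of shears (x₁,x₂,x₃) ↦ (x₁ + t·x₂, x₂, x₃). -/
theorem no_cone_invariant_under_shear :
    ¬ ∃ K : Set (Fin 3 → ℝ), IsRegularCone K ∧
      ∀ t : ℝ, (fun v : Fin 3 → ℝ => ![v 0 + t * v 1, v 1, v 2]) '' K = K := by
  rintro ⟨K, ⟨hclosed, hconv, hscale, hint, hpointed⟩, hinv⟩
  -- Find a point of K whose second coordinate is nonzero.
  obtain ⟨x, hxK, hx1⟩ : ∃ x ∈ K, x 1 ≠ 0 := by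
    obtain ⟨y, hy⟩ := hint
    by_cases h : y 1 ≠ 0
    · exact ⟨y, interior_subset hy, h⟩
    · push_neg at h
      obtain ⟨r, hr, hball⟩ := Metric.isOpen_iff.1 isOpen_interior y hy
      refine ⟨y + (r/2) • (Pi.single 1 1 : Fin 3 → ℝ), interior_subset (hball ?_), ?_⟩
      · rw [Metric.mem_ball]
        have : dist (y + (r/2) • (Pi.single 1 1 : Fin 3 → ℝ)) y
            = ‖(r/2) • (Pi.single 1 (1:ℝ) : Fin 3 → ℝ)‖ := by
          simp [dist_eq_norm]
        rw [this, norm_smul]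
        simp [Pi.norm_single, abs_of_pos hr]
        linarith
      · simp [h]
        linarith
  -- Both (x 1, 0, 0) and (-(x 1), 0, 0) lie in K.
  have h1 : ![x 1, 0, 0] ∈ K := by
    simpa using aux_limit_mem hclosed hscale hinv hxK 1
  have h2 : ![-(x 1), 0, 0] ∈ K := by
    simpa using aux_limit_mem hclosed hscale hinv hxK (-1)
  have hneg : -(![x 1, 0, 0] : Fin 3 → ℝ) = ![-(x 1), 0, 0] := by
    funext i
    fin_cases i <;> simp
  have := hpointed _ h1 (by rw [hneg]; exact h2)
  have h0 : (![x 1, 0, 0] : Fin 3 → ℝ) 0 = 0 := by rw [this]; rfl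
  simp at h0
  exact hx1 h0
end

section
/- Let K ⊆ ℝ³ be a regular convex cone that is invariant under the one-parameter group generated by the matrix A = [[1,1,0],[0,1,0],[0,0,0]], i.e., exp(tA)[K] = K for all t ∈ ℝ. Then K is isomorphic to the exponential cone K_exp. -/
open Matrix Set

/-- Two cones in ℝ³ are isomorphic if a linear automorphism maps one onto the other. -/
def ConeIso (K K' : Set (Fin 3 → ℝ)) : Prop :=
  ∃ S : Matrix (Fin 3) (Fin 3) ℝ, IsUnit S.det ∧ (fun v => S.mulVec v) '' K = K'

/-- The exponential cone, the homogenization of the epigraph of the exponential function. -/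
def ExpCone : Set (Fin 3 → ℝ) :=
  {v | (v 2 = 0 ∧ v 0 ≤ 0 ∧ 0 ≤ v 1) ∨ (0 < v 2 ∧ v 2 * Real.exp (v 0 / v 2) ≤ v 1)}

/-!
Scaling `exp (t • A)` by `e^{-t}` shows that `K` is invariant under the shears
`(x, y, z) ↦ (x + t y, y, e^{-t} z)`. Letting `t → ±∞` puts `(y, 0, 0)` and `(0, 0, z)` in `K`
for every `(x, y, z) ∈ K`, so, `K` being pointed, `y` and `z` have constant signs on `K`, which a
diagonal change of coordinates makes nonnegative. The shears move `(x, 1, z)` to `(0, 1, e^x z)`,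
so `K ∩ {y = 1} = {z ≥ l e^{-x}}` with `l` the least `z` such that `(0, 1, z) ∈ K`. If `l = 0`,
shearing `(0, 1, 0)` makes `(-1, 0, 0)` a recession direction of `K`, opposite to `(1, 0, 0) ∈ K`;
and the face `y = 0` is `{x ≥ 0, z ≥ 0}` because `e^{-x}` outgrows every linear bound. This is the
exponential cone after the coordinate change `(x, y, z) ↦ (-x, z / l, y)`.
-/

open Filter Topology

namespace IsRegularCone

variable {n : ℕ} {K : Set (Fin n → ℝ)}

theorem zero_mem (hK : IsRegularCone K) : (0 : Fin n → ℝ) ∈ K := by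
  obtain ⟨u, hu⟩ := hK.2.2.2.1
  have hlim : Tendsto (fun c : ℝ => c • u) (𝓝[>] 0) (𝓝 0) :=
    ((continuous_id.smul continuous_const).tendsto' (0 : ℝ) _ (zero_smul ℝ u)).mono_left
      nhdsWithin_le_nhds
  exact hK.1.mem_of_tendsto hlim
    (eventually_nhdsWithin_of_forall fun c hc => hK.2.2.1 c hc u (interior_subset hu))

theorem smul_mem (hK : IsRegularCone K) {c : ℝ} (hc : 0 ≤ c) {x : Fin n → ℝ} (hx : x ∈ K) :
    c • x ∈ K := by
  rcases hc.eq_or_lt with rfl | hc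
  · simpa using hK.zero_mem
  · exact hK.2.2.1 c hc x hx

theorem smul_mem_iff (hK : IsRegularCone K) {c : ℝ} (hc : 0 < c) {x : Fin n → ℝ} :
    c • x ∈ K ↔ x ∈ K := by
  refine ⟨fun h => ?_, hK.smul_mem hc.le⟩
  simpa [smul_smul, inv_mul_cancel₀ hc.ne'] using hK.smul_mem (inv_pos.mpr hc).le h

theorem add_mem (hK : IsRegularCone K) {x y : Fin n → ℝ} (hx : x ∈ K) (hy : y ∈ K) :
    x + y ∈ K := by
  have hmid := hK.2.1 hx hy (by norm_num : (0 : ℝ) ≤ 1 / 2) (by norm_num : (0 : ℝ) ≤ 1 / 2)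
    (by norm_num)
  convert hK.smul_mem (by norm_num : (0 : ℝ) ≤ 2) hmid using 1
  rw [smul_add, smul_smul, smul_smul]
  norm_num

theorem mem_of_forall_add_smul_mem (hK : IsRegularCone K) {v u : Fin n → ℝ}
    (h : ∀ t : ℝ, 0 < t → v + t • u ∈ K) : u ∈ K := by
  have hlim : Tendsto (fun t : ℝ => t⁻¹ • v + u) atTop (𝓝 u) := by
    simpa using ((tendsto_inv_atTop_zero (𝕜 := ℝ)).smul_const v).add_const u
  refine hK.1.mem_of_tendsto hlim ((eventually_gt_atTop 0).mono fun t ht => ?_)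
  convert hK.smul_mem (inv_pos.mpr ht).le (h t ht) using 1
  rw [smul_add, smul_smul, inv_mul_cancel₀ ht.ne', one_smul]

theorem exists_mem_apply_ne_zero (hK : IsRegularCone K) (i : Fin n) : ∃ v ∈ K, v i ≠ 0 := by
  obtain ⟨u, hu⟩ := hK.2.2.2.1
  have hcont : Continuous fun s : ℝ => u + s • Pi.single i (1 : ℝ) := by fun_prop
  have hnhds : ∀ᶠ s in 𝓝 (0 : ℝ), u + s • Pi.single i (1 : ℝ) ∈ K := by
    refine hcont.continuousAt.eventually_mem ?_
    simpa using mem_interior_iff_mem_nhds.mp hu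
  obtain ⟨s, hs, hs0⟩ := ((hnhds.filter_mono nhdsWithin_le_nhds).and
    (self_mem_nhdsWithin (s := {0}ᶜ))).exists
  by_cases hui : u i = 0
  · exact ⟨_, hs, by simpa [hui] using hs0⟩
  · exact ⟨u, interior_subset hu, hui⟩

theorem nonneg_or_nonpos_of_smul_mem (hK : IsRegularCone K) (φ : (Fin n → ℝ) → ℝ)
    {w : Fin n → ℝ} (hw : w ≠ 0) (h : ∀ v ∈ K, φ v • w ∈ K) :
    (∀ v ∈ K, 0 ≤ φ v) ∨ ∀ v ∈ K, φ v ≤ 0 := by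
  by_contra! ⟨⟨a, ha, hφa⟩, ⟨b, hb, hφb⟩⟩
  refine hw (hK.2.2.2.2 w ?_ ?_)
  · simpa [smul_smul, inv_mul_cancel₀ hφb.ne'] using hK.smul_mem (inv_nonneg.mpr hφb.le) (h b hb)
  · simpa [smul_smul, inv_mul_cancel₀ hφa.ne] using
      hK.smul_mem (inv_nonneg.mpr (neg_nonneg.mpr hφa.le)) (h a ha)

theorem image (hK : IsRegularCone K) (e : (Fin n → ℝ) ≃L[ℝ] (Fin n → ℝ)) :
    IsRegularCone (e '' K) := by
  obtain ⟨hcl, hconv, hsc, hint, hpt⟩ := hK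
  refine ⟨e.toHomeomorph.isClosed_image.mpr hcl, hconv.linear_image e.toLinearMap, ?_, ?_, ?_⟩
  · rintro c hc _ ⟨x, hx, rfl⟩
    exact ⟨c • x, hsc c hc x hx, map_smul e c x⟩
  · exact (e.toHomeomorph.image_interior K ▸ hint.image _ :)
  · rintro _ ⟨x, hx, rfl⟩ ⟨y, hy, hyx⟩
    rw [← map_neg, e.injective.eq_iff] at hyx
    rw [hpt x hx (hyx ▸ hy), map_zero]

theorem image_mulVec (hK : IsRegularCone K) {S : Matrix (Fin n) (Fin n) ℝ} (hS : IsUnit S.det) :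
    IsRegularCone ((S *ᵥ ·) '' K) :=
  hK.image (S.toLinearEquiv' (S.invertibleOfIsUnitDet hS)).toContinuousLinearEquiv

end IsRegularCone

theorem ConeIso.trans {K K' K'' : Set (Fin 3 → ℝ)} (h : ConeIso K K') (h' : ConeIso K' K'') :
    ConeIso K K'' := by
  obtain ⟨S, hS, rfl⟩ := h
  obtain ⟨S', hS', rfl⟩ := h'
  refine ⟨S' * S, by simpa [Matrix.det_mul] using hS'.mul hS, ?_⟩
  rw [Set.image_image]
  simp only [Matrix.mulVec_mulVec]

theorem NormedSpace.exp_eq_one_add_of_mul_self_eq_zero {𝔸 : Type*} [Ring 𝔸] [Algebra ℚ 𝔸]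
    [TopologicalSpace 𝔸] [IsTopologicalRing 𝔸] {x : 𝔸} (hx : x * x = 0) :
    NormedSpace.exp x = 1 + x := by
  have hpow : ∀ k, x ^ (k + 2) = 0 := fun k => by rw [pow_add, sq, hx, mul_zero]
  rw [NormedSpace.exp_eq_tsum_rat]
  dsimp only
  rw [tsum_eq_sum (s := Finset.range 2)]
  · simp [Finset.sum_range_succ]
  · intro k hk
    obtain ⟨k, rfl⟩ := Nat.exists_eq_add_of_le (by simpa [Nat.succ_le_iff] using hk : 2 ≤ k)
    rw [add_comm, hpow, smul_zero]

noncomputable def jordanFlow (t : ℝ) (v : Fin 3 → ℝ) : Fin 3 → ℝ :=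
  ![Real.exp t * (v 0 + t * v 1), Real.exp t * v 1, v 2]

theorem exp_smul_jordanBlock_mulVec (t : ℝ) (v : Fin 3 → ℝ) :
    NormedSpace.exp (t • !![1, 1, 0; 0, 1, 0; 0, 0, 0] : Matrix (Fin 3) (Fin 3) ℝ) *ᵥ v =
      jordanFlow t v := by
  set N : Matrix (Fin 3) (Fin 3) ℝ := !![0, t, 0; 0, 0, 0; 0, 0, 0]
  have hsplit : t • !![1, 1, 0; 0, 1, 0; 0, 0, 0] = diagonal ![t, t, 0] + N := by
    ext i j; fin_cases i <;> fin_cases j <;> simp [N]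
  have hcomm : Commute (diagonal ![t, t, 0]) N := by
    ext i j; fin_cases i <;> fin_cases j <;> simp [N, Matrix.mul_apply, Fin.sum_univ_three]
  have hN : N * N = 0 := by
    ext i j; fin_cases i <;> fin_cases j <;> simp [N, Matrix.mul_apply, Fin.sum_univ_three]
  rw [hsplit, Matrix.exp_add_of_commute _ _ hcomm, Matrix.exp_diagonal,
    NormedSpace.exp_eq_one_add_of_mul_self_eq_zero hN]
  ext i; fin_cases i
  all_goals simp [N, jordanFlow, Matrix.mulVec, dotProduct, Fin.sum_univ_three, Matrix.mul_apply,
      Pi.exp_def, ← Real.exp_eq_exp_ℝ]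
  ring

theorem jordanFlow_diagonal_mulVec (t a b : ℝ) (v : Fin 3 → ℝ) :
    jordanFlow t (diagonal ![a, a, b] *ᵥ v) = diagonal ![a, a, b] *ᵥ jordanFlow t v := by
  ext i; fin_cases i
  all_goals simp [jordanFlow, mulVec_diagonal]
  all_goals ring

def IsJordanFlowInvariant (K : Set (Fin 3 → ℝ)) : Prop :=
  ∀ t : ℝ, ∀ v ∈ K, jordanFlow t v ∈ K

noncomputable def sliceInf (K : Set (Fin 3 → ℝ)) : ℝ :=
  sInf {z : ℝ | ![0, 1, z] ∈ K}

def expConeModel (l : ℝ) : Set (Fin 3 → ℝ) :=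
  {v | (v 1 = 0 ∧ 0 ≤ v 0 ∧ 0 ≤ v 2) ∨ (0 < v 1 ∧ l * v 1 * Real.exp (-(v 0 / v 1)) ≤ v 2)}

theorem coneIso_expConeModel {l : ℝ} (hl : 0 < l) : ConeIso (expConeModel l) ExpCone := by
  set S : Matrix (Fin 3) (Fin 3) ℝ := !![-1, 0, 0; 0, 0, l⁻¹; 0, 1, 0]
  set T : Matrix (Fin 3) (Fin 3) ℝ := !![-1, 0, 0; 0, 0, 1; 0, l, 0]
  have hTS : T * S = 1 := by
    ext i j; fin_cases i <;> fin_cases j <;>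
      simp [S, T, Matrix.mul_apply, Fin.sum_univ_three, hl.ne']
  have hST : S * T = 1 := by
    ext i j; fin_cases i <;> fin_cases j <;>
      simp [S, T, Matrix.mul_apply, Fin.sum_univ_three, hl.ne']
  refine ⟨S, Matrix.isUnit_det_of_left_inverse hTS, ?_⟩
  rw [Set.image_eq_preimage_of_inverse (g := (T *ᵥ ·)) (fun v => by simp [hTS])
    (fun v => by simp [hST])]
  ext w
  simp [expConeModel, ExpCone, T, dotProduct, Fin.sum_univ_three, neg_div,
    mul_assoc, hl]

namespace IsJordanFlowInvariant

variable {K : Set (Fin 3 → ℝ)} {v : Fin 3 → ℝ}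

theorem shear_mem (hE : IsJordanFlowInvariant K) (hK : IsRegularCone K) (t : ℝ) (hv : v ∈ K) :
    ![v 0 + t * v 1, v 1, Real.exp (-t) * v 2] ∈ K := by
  convert hK.smul_mem (Real.exp_pos (-t)).le (hE t v hv) using 1
  ext i; fin_cases i
  all_goals simp [jordanFlow, ← mul_assoc, ← Real.exp_add]

theorem shear_mem_iff (hE : IsJordanFlowInvariant K) (hK : IsRegularCone K) (t : ℝ) :
    ![v 0 + t * v 1, v 1, Real.exp (-t) * v 2] ∈ K ↔ v ∈ K := by
  refine ⟨fun h => ?_, hE.shear_mem hK t⟩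
  convert hE.shear_mem hK (-t) h using 1
  ext i; fin_cases i
  all_goals simp [← mul_assoc, ← Real.exp_add]

theorem vertical_mem (hE : IsJordanFlowInvariant K) (hK : IsRegularCone K) (hv : v ∈ K) :
    ![0, 0, v 2] ∈ K := by
  have hexp := Real.tendsto_exp_neg_atTop_nhds_zero
  have hmul : Tendsto (fun s : ℝ => s * Real.exp (-s)) atTop (𝓝 0) := by
    simpa using Real.tendsto_pow_mul_exp_neg_atTop_nhds_zero 1
  have hlim : Tendsto (fun s : ℝ => jordanFlow (-s) v) atTop (𝓝 ![0, 0, v 2]) := by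
    refine .matrixVecCons ?_
      (.matrixVecCons (by simpa using hexp.mul_const (v 1)) tendsto_const_nhds)
    convert (hexp.mul_const (v 0)).sub (hmul.mul_const (v 1)) using 2
    · ring
    · simp
  exact hK.1.mem_of_tendsto hlim (Eventually.of_forall fun s => hE (-s) v hv)

theorem horizontal_mem (hE : IsJordanFlowInvariant K) (hK : IsRegularCone K) (hv : v ∈ K) :
    ![v 1, 0, 0] ∈ K := by
  refine hK.mem_of_forall_add_smul_mem (v := v) fun t ht => ?_
  have hc : 0 ≤ 1 - Real.exp (-t) := by
    simpa using Real.exp_le_one_iff.mpr (neg_nonpos.mpr ht.le)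
  convert hK.add_mem (hE.shear_mem hK t hv) (hK.smul_mem hc (hE.vertical_mem hK hv)) using 1
  ext i; fin_cases i
  all_goals simp
  all_goals ring

theorem image_diagonal (hE : IsJordanFlowInvariant K) (a b : ℝ) :
    IsJordanFlowInvariant ((diagonal ![a, a, b] *ᵥ ·) '' K) := by
  rintro t _ ⟨v, hv, rfl⟩
  exact ⟨_, hE t v hv, (jordanFlow_diagonal_mulVec t a b v).symm⟩

theorem exists_diagonal_image_nonneg (hE : IsJordanFlowInvariant K) (hK : IsRegularCone K) :
    ∃ D : Matrix (Fin 3) (Fin 3) ℝ, IsUnit D.det ∧ IsJordanFlowInvariant ((D *ᵥ ·) '' K) ∧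
      (∀ v ∈ (D *ᵥ ·) '' K, 0 ≤ v 1) ∧ ∀ v ∈ (D *ᵥ ·) '' K, 0 ≤ v 2 := by
  have sign : ∀ φ : (Fin 3 → ℝ) → ℝ, ((∀ v ∈ K, 0 ≤ φ v) ∨ ∀ v ∈ K, φ v ≤ 0) →
      ∃ e : ℝ, e ≠ 0 ∧ ∀ v ∈ K, 0 ≤ e * φ v := by
    rintro φ (h | h)
    · exact ⟨1, one_ne_zero, fun v hv => by simpa using h v hv⟩
    · exact ⟨-1, by norm_num, fun v hv => by simpa using h v hv⟩
  obtain ⟨a, ha, hya⟩ := sign (· 1) <| hK.nonneg_or_nonpos_of_smul_mem _ (w := ![1, 0, 0])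
    (by simp) fun v hv => by simpa using hE.horizontal_mem hK hv
  obtain ⟨b, hb, hzb⟩ := sign (· 2) <| hK.nonneg_or_nonpos_of_smul_mem _ (w := ![0, 0, 1])
    (by simp) fun v hv => by simpa using hE.vertical_mem hK hv
  refine ⟨diagonal ![a, a, b], by simp [det_diagonal, Fin.prod_univ_three, ha, hb],
    hE.image_diagonal a b, ?_, ?_⟩
  · rintro _ ⟨v, hv, rfl⟩
    simpa [mulVec_diagonal] using hya v hv
  · rintro _ ⟨v, hv, rfl⟩
    simpa [mulVec_diagonal] using hzb v hv

theorem mem_iff_unit_slice (hE : IsJordanFlowInvariant K) (hK : IsRegularCone K)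
    (hv : 0 < v 1) : v ∈ K ↔ ![0, 1, Real.exp (v 0 / v 1) * v 2 / v 1] ∈ K := by
  have heq : v 1 • ![0, 1, Real.exp (v 0 / v 1) * v 2 / v 1] =
      ![v 0 + -(v 0 / v 1) * v 1, v 1, Real.exp (-(-(v 0 / v 1))) * v 2] := by
    ext i; fin_cases i
    · simp [div_mul_cancel₀ _ hv.ne']
    · simp
    · simp [mul_div_cancel₀ _ hv.ne']
  rw [← hE.shear_mem_iff hK (-(v 0 / v 1)), ← heq, hK.smul_mem_iff hv]

theorem basis_zero_mem (hE : IsJordanFlowInvariant K) (hK : IsRegularCone K)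
    (hy : ∀ v ∈ K, 0 ≤ v 1) : ![1, 0, 0] ∈ K := by
  obtain ⟨p, hp, hp1⟩ := hK.exists_mem_apply_ne_zero 1
  have hpos : 0 < p 1 := (hy p hp).lt_of_ne' hp1
  simpa [inv_mul_cancel₀ hp1] using hK.smul_mem (inv_pos.mpr hpos).le (hE.horizontal_mem hK hp)

theorem basis_two_mem (hE : IsJordanFlowInvariant K) (hK : IsRegularCone K)
    (hz : ∀ v ∈ K, 0 ≤ v 2) : ![0, 0, 1] ∈ K := by
  obtain ⟨p, hp, hp2⟩ := hK.exists_mem_apply_ne_zero 2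
  have hpos : 0 < p 2 := (hz p hp).lt_of_ne' hp2
  simpa [inv_mul_cancel₀ hp2] using hK.smul_mem (inv_pos.mpr hpos).le (hE.vertical_mem hK hp)

theorem mem_unit_slice_iff (hE : IsJordanFlowInvariant K) (hK : IsRegularCone K)
    (hy : ∀ v ∈ K, 0 ≤ v 1) (hz : ∀ v ∈ K, 0 ≤ v 2) {z : ℝ} :
    ![0, 1, z] ∈ K ↔ sliceInf K ≤ z := by
  obtain ⟨p, hp, hp1⟩ := hK.exists_mem_apply_ne_zero 1
  have hne : {z : ℝ | ![0, 1, z] ∈ K}.Nonempty :=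
    ⟨_, (hE.mem_iff_unit_slice hK ((hy p hp).lt_of_ne' hp1)).mp hp⟩
  have hbdd : BddBelow {z : ℝ | ![0, 1, z] ∈ K} := ⟨0, fun z hz' => by simpa using hz _ hz'⟩
  have hclosed : IsClosed {z : ℝ | ![0, 1, z] ∈ K} := hK.1.preimage (by fun_prop)
  refine ⟨fun h => csInf_le hbdd h, fun h => ?_⟩
  convert hK.add_mem (hclosed.csInf_mem hne hbdd)
    (hK.smul_mem (sub_nonneg.mpr h) (hE.basis_two_mem hK hz)) using 1
  ext i; fin_cases i
  all_goals simp [sliceInf]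

theorem mem_iff_of_pos (hE : IsJordanFlowInvariant K) (hK : IsRegularCone K)
    (hy : ∀ v ∈ K, 0 ≤ v 1) (hz : ∀ v ∈ K, 0 ≤ v 2) (hv : 0 < v 1) :
    v ∈ K ↔ sliceInf K * v 1 * Real.exp (-(v 0 / v 1)) ≤ v 2 := by
  rw [hE.mem_iff_unit_slice hK hv, hE.mem_unit_slice_iff hK hy hz, le_div_iff₀ hv,
    ← div_le_iff₀' (Real.exp_pos _), Real.exp_neg, div_eq_mul_inv]

theorem sliceInf_pos (hE : IsJordanFlowInvariant K) (hK : IsRegularCone K)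
    (hy : ∀ v ∈ K, 0 ≤ v 1) (hz : ∀ v ∈ K, 0 ≤ v 2) : 0 < sliceInf K := by
  by_contra! h
  have hvert : ![0, 1, 0] ∈ K := (hE.mem_unit_slice_iff hK hy hz).mpr h
  have hneg : ![-1, 0, 0] ∈ K := hK.mem_of_forall_add_smul_mem (v := ![0, 1, 0]) fun t _ => by
    simpa using hE.shear_mem hK (-t) hvert
  simpa using hK.2.2.2.2 _ (hE.basis_zero_mem hK hy) (by simpa using hneg)

theorem apply_zero_nonneg_of_apply_one_eq_zero (hE : IsJordanFlowInvariant K)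
    (hK : IsRegularCone K) (hy : ∀ v ∈ K, 0 ≤ v 1) (hz : ∀ v ∈ K, 0 ≤ v 2) (hv : v ∈ K)
    (hv1 : v 1 = 0) : 0 ≤ v 0 := by
  by_contra! hv0
  set l := sliceInf K
  have hl : 0 < l := hE.sliceInf_pos hK hy hz
  have hv2 : 0 ≤ v 2 := hz v hv
  -- chosen so that `l * s ^ 2 * v 0 ^ 2 / 2 > s * v 2`, against `e^x ≥ 1 + x + x ^ 2 / 2`
  set s := (2 * v 2 + 1) / (l * v 0 ^ 2)
  have hs : 0 < s := div_pos (by linarith) (mul_pos hl (by nlinarith))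
  have hw : s • v + ![0, 1, l] ∈ K :=
    hK.add_mem (hK.smul_mem hs.le hv) ((hE.mem_unit_slice_iff hK hy hz).mpr le_rfl)
  have key : l * Real.exp (-(s * v 0)) ≤ s * v 2 + l := by
    simpa [hv1] using (hE.mem_iff_of_pos hK hy hz (by simp [hv1])).mp hw
  have hq := Real.quadratic_le_exp_of_nonneg (x := -(s * v 0)) (by nlinarith)
  have hsl : l * s * v 0 ^ 2 = 2 * v 2 + 1 := by
    simp only [s]
    field_simp [hv0.ne]
  nlinarith [mul_le_mul_of_nonneg_left hq hl.le, mul_pos (mul_pos hl hs) (neg_pos.mpr hv0)]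

theorem eq_expConeModel (hE : IsJordanFlowInvariant K) (hK : IsRegularCone K)
    (hy : ∀ v ∈ K, 0 ≤ v 1) (hz : ∀ v ∈ K, 0 ≤ v 2) : K = expConeModel (sliceInf K) := by
  ext v
  rcases lt_trichotomy (v 1) 0 with hv1 | hv1 | hv1
  · simp only [expConeModel, Set.mem_ofPred_eq, hv1.ne, hv1.not_gt, false_and, or_false,
      iff_false]
    exact fun hv => hv1.not_ge (hy v hv)
  · simp only [expConeModel, Set.mem_ofPred_eq, hv1, lt_irrefl, true_and, false_and, or_false]
    refine ⟨fun hv => ⟨hE.apply_zero_nonneg_of_apply_one_eq_zero hK hy hz hv hv1, hz v hv⟩,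
      fun ⟨h0, h2⟩ => ?_⟩
    convert hK.add_mem (hK.smul_mem h0 (hE.basis_zero_mem hK hy))
      (hK.smul_mem h2 (hE.basis_two_mem hK hz)) using 1
    ext i; fin_cases i
    all_goals simp [hv1]
  · simp only [expConeModel, Set.mem_ofPred_eq, hv1, hv1.ne', false_and, true_and, false_or]
    exact hE.mem_iff_of_pos hK hy hz hv1

theorem coneIso_expCone_of_nonneg (hE : IsJordanFlowInvariant K) (hK : IsRegularCone K)
    (hy : ∀ v ∈ K, 0 ≤ v 1) (hz : ∀ v ∈ K, 0 ≤ v 2) : ConeIso K ExpCone := by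
  rw [hE.eq_expConeModel hK hy hz]
  exact coneIso_expConeModel (hE.sliceInf_pos hK hy hz)

end IsJordanFlowInvariant

/-- a regular convex cone in ℝ³ invariant under the one-parameter group
generated by [[1,1,0],[0,1,0],[0,0,0]] is isomorphic to the exponential cone. -/
theorem cone_invariant_jordan_block_is_exp (K : Set (Fin 3 → ℝ)) (hK : IsRegularCone K)
    (hinv : ∀ t : ℝ,
      (fun v => (NormedSpace.exp (t • (!![1,1,0;0,1,0;0,0,0] : Matrix (Fin 3) (Fin 3) ℝ))).mulVec v) '' K = K) :
    ConeIso K ExpCone := by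
  have hE : IsJordanFlowInvariant K := fun t v hv => by
    rw [← hinv t]
    exact ⟨v, hv, exp_smul_jordanBlock_mulVec t v⟩
  obtain ⟨D, hD, hDE, hDy, hDz⟩ := hE.exists_diagonal_image_nonneg hK
  exact ConeIso.trans ⟨D, hD, rfl⟩ (hDE.coneIso_expCone_of_nonneg (hK.image_mulVec hD) hDy hDz)
end

section
/- Let φ : (0,∞) → ℝ be twice continuously differentiable, let Ω = {(x,y,z) ∈ ℝ³ : z > 0, y > z·exp(x/z)} (the interior of the exponential cone), and define F : Ω → ℝ by F(x,y,z) = −log y − 2·log z + φ(t), where t = log(y/z) − x/z > 0. Then the Hessian of F satisfies det F''(x,y,z) = (1/(y² z⁴))·(2φ̈(t) − φ̇(t)² − 3φ̇(t)φ̈(t) + φ̇(t)³) for all (x,y,z) ∈ Ω. -/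
/-!
Write `t = log (y / z) - x / z`. The Hessian obeys the second-order calculus rules
(linearity, product rule, and `∇²(φ ∘ t) = φ̈(t) ∇t ∇tᵀ + φ̇(t) ∇²t`), so
`F'' = diag (0, 1 / y², 2 / z²) + φ̈(t) ∇t ∇tᵀ + φ̇(t) ∇²t` with `∇t` and `∇²t` explicit
rational functions of `(x, y, z)`; the determinant of this 3 × 3 matrix is then a rational
identity.
-/

open Set Real

/-- The Hessian matrix of a function on ℝⁿ. -/
noncomputable def hessian {n : ℕ} (F : (Fin n → ℝ) → ℝ) (x : Fin n → ℝ) :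
    Matrix (Fin n) (Fin n) ℝ :=
  fun i j => fderiv ℝ (fun y => fderiv ℝ F y (Pi.single j 1)) x (Pi.single i 1)

open Filter Topology Matrix

noncomputable def grad {n : ℕ} (F : (Fin n → ℝ) → ℝ) (x : Fin n → ℝ) : Fin n → ℝ :=
  fun i => fderiv ℝ F x (Pi.single i 1)

section ContDiffAt

variable {𝕜 E F : Type*} [NontriviallyNormedField 𝕜] [NormedAddCommGroup E] [NormedSpace 𝕜 E]
  [NormedAddCommGroup F] [NormedSpace 𝕜 F] {f : E → F} {x : E} {n : WithTop ℕ∞}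

theorem ContDiffAt.eventually_differentiableAt (hf : ContDiffAt 𝕜 n f x) (hn : 1 ≤ n) :
    ∀ᶠ y in 𝓝 x, DifferentiableAt 𝕜 f y :=
  ((hf.of_le hn).eventually (by simp)).mono fun _ hy => hy.differentiableAt one_ne_zero

theorem ContDiffAt.differentiableAt_fderiv_apply (hf : ContDiffAt 𝕜 n f x) (hn : 2 ≤ n) (v : E) :
    DifferentiableAt 𝕜 (fun y => fderiv 𝕜 f y v) x :=
  ((hf.fderiv_right (m := 1) hn).differentiableAt one_ne_zero).clm_apply
    (differentiableAt_const v)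

end ContDiffAt

section Calculus

variable {n : ℕ} {F G g : (Fin n → ℝ) → ℝ} {x : Fin n → ℝ}

theorem hessian_apply (F : (Fin n → ℝ) → ℝ) (x : Fin n → ℝ) (i j : Fin n) :
    hessian F x i j = grad (fun y => grad F y j) x i := rfl

theorem grad_congr (h : F =ᶠ[𝓝 x] G) : grad F x = grad G x := by
  unfold grad
  rw [h.fderiv_eq]

theorem hessian_congr (h : F =ᶠ[𝓝 x] G) : hessian F x = hessian G x := by
  ext i j
  refine congrFun (grad_congr ?_) i
  filter_upwards [h.fderiv (𝕜 := ℝ)] with y hy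
  simp only [hy]

theorem grad_const (c : ℝ) : grad (fun _ : Fin n → ℝ => c) x = 0 := by
  ext i; simp [grad]

theorem grad_coord (k : Fin n) : grad (fun y => y k) x = (Pi.single k 1 : Fin n → ℝ) := by
  ext i
  simp only [grad]
  rw [show (fun y : Fin n → ℝ => y k) = ContinuousLinearMap.proj (R := ℝ) k from rfl,
    ContinuousLinearMap.fderiv]
  simp [Pi.single_apply, eq_comm]

theorem grad_add (hF : DifferentiableAt ℝ F x) (hG : DifferentiableAt ℝ G x) :
    grad (fun y => F y + G y) x = grad F x + grad G x := by
  ext i; simp [grad, fderiv_fun_add hF hG]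

theorem grad_sub (hF : DifferentiableAt ℝ F x) (hG : DifferentiableAt ℝ G x) :
    grad (fun y => F y - G y) x = grad F x - grad G x := by
  ext i; simp [grad, fderiv_fun_sub hF hG]

theorem grad_mul (hF : DifferentiableAt ℝ F x) (hG : DifferentiableAt ℝ G x) :
    grad (fun y => F y * G y) x = F x • grad G x + G x • grad F x := by
  ext i; simp [grad, fderiv_fun_mul hF hG]

theorem grad_comp {φ : ℝ → ℝ} {φ' : ℝ} (hφ : HasDerivAt φ φ' (g x))
    (hg : DifferentiableAt ℝ g x) : grad (fun y => φ (g y)) x = φ' • grad g x := by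
  ext i
  simp only [grad]
  rw [show (fun y => φ (g y)) = φ ∘ g from rfl, (hφ.comp_hasFDerivAt x hg.hasFDerivAt).fderiv]
  rfl

theorem grad_comp_coord {φ : ℝ → ℝ} {φ' : ℝ} (k : Fin n) (hφ : HasDerivAt φ φ' (x k)) :
    grad (fun y => φ (y k)) x = φ' • Pi.single k 1 := by
  rw [grad_comp (g := fun y => y k) hφ (by fun_prop), grad_coord]

theorem ContDiffAt.differentiableAt_grad (hF : ContDiffAt ℝ 2 F x) (j : Fin n) :
    DifferentiableAt ℝ (fun y => grad F y j) x :=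
  hF.differentiableAt_fderiv_apply le_rfl _

theorem hessian_const (c : ℝ) : hessian (fun _ : Fin n → ℝ => c) x = 0 := by
  ext i j
  simp [hessian_apply, grad_const]

theorem hessian_coord (k : Fin n) : hessian (fun y => y k) x = 0 := by
  ext i j
  simp [hessian_apply, grad_coord, grad_const]

theorem hessian_add (hF : ContDiffAt ℝ 2 F x) (hG : ContDiffAt ℝ 2 G x) :
    hessian (fun y => F y + G y) x = hessian F x + hessian G x := by
  ext i j
  have hgrad : (fun y => grad (fun y => F y + G y) y j) =ᶠ[𝓝 x]
      fun y => grad F y j + grad G y j := by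
    filter_upwards [hF.eventually_differentiableAt one_le_two,
      hG.eventually_differentiableAt one_le_two] with y hFy hGy
    rw [grad_add hFy hGy, Pi.add_apply]
  rw [hessian_apply, grad_congr hgrad,
    grad_add (hF.differentiableAt_grad j) (hG.differentiableAt_grad j)]
  rfl

theorem hessian_sub (hF : ContDiffAt ℝ 2 F x) (hG : ContDiffAt ℝ 2 G x) :
    hessian (fun y => F y - G y) x = hessian F x - hessian G x := by
  ext i j
  have hgrad : (fun y => grad (fun y => F y - G y) y j) =ᶠ[𝓝 x]
      fun y => grad F y j - grad G y j := by
    filter_upwards [hF.eventually_differentiableAt one_le_two,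
      hG.eventually_differentiableAt one_le_two] with y hFy hGy
    rw [grad_sub hFy hGy, Pi.sub_apply]
  rw [hessian_apply, grad_congr hgrad,
    grad_sub (hF.differentiableAt_grad j) (hG.differentiableAt_grad j)]
  rfl

theorem hessian_mul (hF : ContDiffAt ℝ 2 F x) (hG : ContDiffAt ℝ 2 G x) :
    hessian (fun y => F y * G y) x = F x • hessian G x + G x • hessian F x +
      vecMulVec (grad F x) (grad G x) + vecMulVec (grad G x) (grad F x) := by
  ext i j
  have hgrad : (fun y => grad (fun y => F y * G y) y j) =ᶠ[𝓝 x]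
      fun y => F y * grad G y j + G y * grad F y j := by
    filter_upwards [hF.eventually_differentiableAt one_le_two,
      hG.eventually_differentiableAt one_le_two] with y hFy hGy
    rw [grad_mul hFy hGy]; rfl
  have hF₁ := hF.differentiableAt two_ne_zero
  have hG₁ := hG.differentiableAt two_ne_zero
  rw [hessian_apply, grad_congr hgrad,
    grad_add (hF₁.fun_mul (hG.differentiableAt_grad j))
      (hG₁.fun_mul (hF.differentiableAt_grad j)),
    grad_mul hF₁ (hG.differentiableAt_grad j), grad_mul hG₁ (hF.differentiableAt_grad j)]
  simp only [Pi.add_apply, Pi.smul_apply, smul_eq_mul, Matrix.add_apply, Matrix.smul_apply,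
    vecMulVec_apply, hessian_apply]
  ring

theorem hessian_comp {φ φ' : ℝ → ℝ} {φ'' : ℝ} (hφ : ∀ᶠ s in 𝓝 (g x), HasDerivAt φ (φ' s) s)
    (hφ' : HasDerivAt φ' φ'' (g x)) (hg : ContDiffAt ℝ 2 g x) :
    hessian (fun y => φ (g y)) x =
      φ'' • vecMulVec (grad g x) (grad g x) + φ' (g x) • hessian g x := by
  ext i j
  have hgrad : (fun y => grad (fun y => φ (g y)) y j) =ᶠ[𝓝 x]
      fun y => φ' (g y) * grad g y j := by
    filter_upwards [hg.continuousAt.eventually hφ,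
      hg.eventually_differentiableAt one_le_two] with y hφy hgy
    rw [grad_comp hφy hgy]; rfl
  have hg₁ := hg.differentiableAt two_ne_zero
  rw [hessian_apply, grad_congr hgrad,
    grad_mul (F := fun y => φ' (g y)) (hφ'.differentiableAt.comp x hg₁)
      (hg.differentiableAt_grad j), grad_comp hφ' hg₁]
  simp only [Pi.add_apply, Pi.smul_apply, smul_eq_mul, Matrix.add_apply, Matrix.smul_apply,
    vecMulVec_apply, hessian_apply]
  ring

theorem hessian_const_mul (c : ℝ) (hF : ContDiffAt ℝ 2 F x) :
    hessian (fun y => c * F y) x = c • hessian F x := by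
  rw [hessian_mul contDiffAt_const hF, hessian_const, grad_const]
  simp

theorem hessian_neg (hF : ContDiffAt ℝ 2 F x) : hessian (fun y => -F y) x = -hessian F x := by
  simpa using hessian_const_mul (-1) hF

theorem hessian_comp_of_contDiffAt {φ : ℝ → ℝ} (hφ : ContDiffAt ℝ 2 φ (g x))
    (hg : ContDiffAt ℝ 2 g x) :
    hessian (fun y => φ (g y)) x =
      deriv (deriv φ) (g x) • vecMulVec (grad g x) (grad g x) + deriv φ (g x) • hessian g x := by
  refine hessian_comp ?_ ?_ hg
  · exact (hφ.eventually_differentiableAt one_le_two).mono fun _ hs => hs.hasDerivAt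
  · exact (hφ.differentiableAt_fderiv_apply le_rfl 1).hasDerivAt

theorem hessian_comp_coord {φ φ' : ℝ → ℝ} {φ'' : ℝ} (k : Fin n)
    (hφ : ∀ᶠ s in 𝓝 (x k), HasDerivAt φ (φ' s) s) (hφ' : HasDerivAt φ' φ'' (x k)) :
    hessian (fun y => φ (y k)) x =
      φ'' • vecMulVec (Pi.single k 1) (Pi.single k 1) := by
  rw [hessian_comp (g := fun y => y k) hφ hφ' (by fun_prop), grad_coord,
    hessian_coord, smul_zero, add_zero]

theorem hessian_log_coord (k : Fin n) (hx : x k ≠ 0) :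
    hessian (fun y => Real.log (y k)) x =
      -(x k ^ 2)⁻¹ • vecMulVec (Pi.single k 1) (Pi.single k 1) :=
  hessian_comp_coord k ((eventually_ne_nhds hx).mono fun _ hs => Real.hasDerivAt_log hs)
    (hasDerivAt_inv hx)

theorem hessian_inv_coord (k : Fin n) (hx : x k ≠ 0) :
    hessian (fun y => (y k)⁻¹) x =
      (2 * (x k ^ 3)⁻¹) • vecMulVec (Pi.single k 1) (Pi.single k 1) := by
  refine hessian_comp_coord k ((eventually_ne_nhds hx).mono fun _ hs => hasDerivAt_inv hs) ?_
  refine (((hasDerivAt_pow 2 (x k)).inv (pow_ne_zero 2 hx)).neg).congr_deriv ?_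
  field_simp
  ring

end Calculus

noncomputable def expConeParam (v : Fin 3 → ℝ) : ℝ := Real.log (v 1 / v 2) - v 0 / v 2

noncomputable def expConeAnsatzHessian (p q x y z : ℝ) : Matrix (Fin 3) (Fin 3) ℝ :=
  !![q / z ^ 2, -q / (y * z), -q * (x - z) / z ^ 3 + p / z ^ 2;
    -q / (y * z), (1 + q - p) / y ^ 2, q * (x - z) / (y * z ^ 2);
    -q * (x - z) / z ^ 3 + p / z ^ 2, q * (x - z) / (y * z ^ 2),
      2 / z ^ 2 + q * (x - z) ^ 2 / z ^ 4 + p * (z - 2 * x) / z ^ 3]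

theorem det_expConeAnsatzHessian (p q x : ℝ) {y z : ℝ} (hy : y ≠ 0) (hz : z ≠ 0) :
    (expConeAnsatzHessian p q x y z).det =
      1 / (y ^ 2 * z ^ 4) * (2 * q - p ^ 2 - 3 * p * q + p ^ 3) := by
  rw [expConeAnsatzHessian, det_fin_three]
  simp
  field_simp
  ring

section ExpCone

variable {v : Fin 3 → ℝ}

theorem expConeParam_pos (hz : 0 < v 2) (hv : v 2 * exp (v 0 / v 2) < v 1) :
    0 < expConeParam v := by
  have hlog := Real.log_lt_log (by positivity) hv
  rw [Real.log_mul hz.ne' (exp_pos _).ne', Real.log_exp] at hlog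
  rw [expConeParam, Real.log_div (lt_trans (by positivity) hv).ne' hz.ne']
  linarith

theorem expConeParam_eventuallyEq (hy : 0 < v 1) (hz : 0 < v 2) :
    expConeParam =ᶠ[𝓝 v] fun w => Real.log (w 1) - Real.log (w 2) - w 0 * (w 2)⁻¹ := by
  filter_upwards [(continuous_apply (1 : Fin 3)).continuousAt (Ioi_mem_nhds hy),
    (continuous_apply (2 : Fin 3)).continuousAt (Ioi_mem_nhds hz)] with w hy hz
  rw [expConeParam, Real.log_div (ne_of_gt hy) (ne_of_gt hz), div_eq_mul_inv]

theorem contDiffAt_expConeParam (hy : 0 < v 1) (hz : 0 < v 2) :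
    ContDiffAt ℝ 2 expConeParam v := by
  unfold expConeParam
  fun_prop (disch := positivity)

theorem grad_expConeParam (hy : 0 < v 1) (hz : 0 < v 2) :
    grad expConeParam v = ![-(v 2)⁻¹, (v 1)⁻¹, v 0 / v 2 ^ 2 - (v 2)⁻¹] := by
  have hy' := hy.ne'
  have hz' := hz.ne'
  rw [grad_congr (expConeParam_eventuallyEq hy hz), grad_sub, grad_sub, grad_mul,
    grad_comp_coord 1 (Real.hasDerivAt_log hy'), grad_comp_coord 2 (Real.hasDerivAt_log hz'),
    grad_comp_coord 2 (hasDerivAt_inv hz'), grad_coord]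
  · ext i
    fin_cases i <;> simp
    ring
  all_goals fun_prop (disch := assumption)

theorem hessian_expConeParam (hy : 0 < v 1) (hz : 0 < v 2) :
    hessian expConeParam v =
      !![0, 0, (v 2 ^ 2)⁻¹;
        0, -(v 1 ^ 2)⁻¹, 0;
        (v 2 ^ 2)⁻¹, 0, (v 2 ^ 2)⁻¹ - 2 * v 0 / v 2 ^ 3] := by
  have hy' := hy.ne'
  have hz' := hz.ne'
  rw [hessian_congr (expConeParam_eventuallyEq hy hz), hessian_sub, hessian_sub, hessian_mul,
    hessian_log_coord 1 hy', hessian_log_coord 2 hz', hessian_inv_coord 2 hz', hessian_coord,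
    grad_comp_coord 2 (hasDerivAt_inv hz'), grad_coord]
  · ext i j
    fin_cases i <;> fin_cases j <;> simp [vecMulVec_apply]
    ring
  all_goals fun_prop (disch := assumption)

theorem hessian_expConeAnsatz {φ : ℝ → ℝ} (hφ : ContDiffAt ℝ 2 φ (expConeParam v))
    (hy : 0 < v 1) (hz : 0 < v 2) :
    hessian (fun w => -Real.log (w 1) - 2 * Real.log (w 2) + φ (expConeParam w)) v =
      expConeAnsatzHessian (deriv φ (expConeParam v)) (deriv (deriv φ) (expConeParam v))
        (v 0) (v 1) (v 2) := by
  have hy' := hy.ne'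
  have hz' := hz.ne'
  have ht := contDiffAt_expConeParam hy hz
  rw [hessian_add (F := fun w => -Real.log (w 1) - 2 * Real.log (w 2))
      (by fun_prop (disch := assumption)) (by fun_prop),
    hessian_sub (F := fun w => -Real.log (w 1)) (by fun_prop (disch := assumption))
      (by fun_prop (disch := assumption)),
    hessian_neg (by fun_prop (disch := assumption)),
    hessian_const_mul 2 (by fun_prop (disch := assumption)), hessian_comp_of_contDiffAt hφ ht,
    hessian_log_coord 1 hy', hessian_log_coord 2 hz', grad_expConeParam hy hz,
    hessian_expConeParam hy hz]
  ext i j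
  simp only [Matrix.add_apply, Matrix.sub_apply, Matrix.neg_apply, Matrix.smul_apply,
    vecMulVec_apply, smul_eq_mul]
  fin_cases i <;> fin_cases j <;> simp [expConeAnsatzHessian] <;> field_simp <;> ring

end ExpCone

/-- determinant of the Hessian of the rotationally reduced potential on the
interior of the exponential cone. -/
theorem det_hessian_exp_cone_ansatz (φ : ℝ → ℝ) (hφ : ContDiffOn ℝ 2 φ (Set.Ioi 0))
    (F : (Fin 3 → ℝ) → ℝ)
    (hF : ∀ v : Fin 3 → ℝ,
      F v = -Real.log (v 1) - 2 * Real.log (v 2) + φ (Real.log (v 1 / v 2) - v 0 / v 2)) :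
    ∀ v : Fin 3 → ℝ, 0 < v 2 → v 2 * Real.exp (v 0 / v 2) < v 1 →
      (hessian F v).det =
        1 / ((v 1)^2 * (v 2)^4) *
          (2 * deriv (deriv φ) (Real.log (v 1 / v 2) - v 0 / v 2)
            - (deriv φ (Real.log (v 1 / v 2) - v 0 / v 2))^2
            - 3 * deriv φ (Real.log (v 1 / v 2) - v 0 / v 2)
                * deriv (deriv φ) (Real.log (v 1 / v 2) - v 0 / v 2)
            + (deriv φ (Real.log (v 1 / v 2) - v 0 / v 2))^3) := by
  intro v hz hv
  have hy : 0 < v 1 := lt_trans (by positivity) hv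
  have hφt : ContDiffAt ℝ 2 φ (expConeParam v) :=
    hφ.contDiffAt (Ioi_mem_nhds (expConeParam_pos hz hv))
  rw [show F = fun w => -Real.log (w 1) - 2 * Real.log (w 2) + φ (expConeParam w) from funext hF,
    hessian_expConeAnsatz hφt hy hz, det_expConeAnsatzHessian _ _ _ hy.ne' hz.ne']
  rfl
end

section
/- Let φ : (0,∞) → ℝ be twice continuously differentiable and suppose that for all t > 0 one has φ̇(t) < 2/3 and φ̈(t) > φ̇(t)²(1 − φ̇(t))/(2 − 3φ̇(t)). Then φ̇(t) < 0 for all t > 0. -/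
/-!
Write `f = φ̇`. If `f t ≥ 0` for some `t`, the hypothesis forces `f' > 0` wherever `f ≥ 0`, so `f`
stays non-negative and increases after `t`; hence `0 < f < 2/3` on `[t + 1, ∞)`. There the
differential inequality compares `f` with the comparison flow `ξ' = ξ²(1 - ξ)/(2 - 3ξ)`, whose
separated-variables clock `G` satisfies `d/dt G(f(t)) > 1`. So `G ∘ f` grows without bound, while
`G` is increasing on `(0, 2/3)` and thus bounded by `G(2/3)` there.
-/

open Set Real

/-- The clock `G` of the header: an antiderivative of `(2 - 3y) / (y² (1 - y))`, so that
`G(ξ(t)) - t` is constant along solutions of `ξ' = ξ²(1 - ξ)/(2 - 3ξ)`. -/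
noncomputable def comparisonClock (y : ℝ) : ℝ :=
  log (1 - y) - log y - 2 / y

lemma hasDerivAt_comparisonClock {y : ℝ} (hy₀ : 0 < y) (hy₁ : y < 1) :
    HasDerivAt comparisonClock ((2 - 3 * y) / (y ^ 2 * (1 - y))) y := by
  have hlog₁ : HasDerivAt (fun y => log (1 - y)) (-1 / (1 - y)) y := by
    simpa using ((hasDerivAt_id y).const_sub 1).log (sub_ne_zero.2 hy₁.ne')
  have hinv : HasDerivAt (fun y => 2 / y) (-2 / y ^ 2) y := by
    simpa [div_eq_mul_inv] using (hasDerivAt_inv hy₀.ne').const_mul 2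
  refine ((hlog₁.sub (hasDerivAt_log hy₀.ne')).sub hinv).congr_deriv ?_
  have : 1 - y ≠ 0 := sub_ne_zero.2 hy₁.ne'
  field_simp
  ring

lemma comparisonClock_lt {y : ℝ} (hy₀ : 0 < y) (hy : y < 2 / 3) :
    comparisonClock y < comparisonClock (2 / 3) := by
  have hderiv : ∀ x ∈ Icc y (2 / 3), HasDerivAt comparisonClock
      ((2 - 3 * x) / (x ^ 2 * (1 - x))) x := fun x hx =>
    hasDerivAt_comparisonClock (hy₀.trans_le hx.1) (by linarith [hx.2])
  refine strictMonoOn_of_hasDerivWithinAt_pos (convex_Icc y (2 / 3))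
    (fun x hx => (hderiv x hx).continuousAt.continuousWithinAt)
    (fun x hx => (hderiv x (interior_subset hx)).hasDerivWithinAt) (fun x hx => ?_)
    (left_mem_Icc.2 hy.le) (right_mem_Icc.2 hy.le) hy
  rw [interior_Icc] at hx
  have hx₀ : 0 < x := hy₀.trans hx.1
  exact div_pos (by linarith [hx.2]) (mul_pos (pow_pos hx₀ 2) (by linarith [hx.2]))

lemma strictMonoOn_Ici_of_hasDerivAt_pos {f f' : ℝ → ℝ} {a : ℝ}
    (hf : ∀ x ∈ Ici a, HasDerivAt f (f' x) x) (hpos : ∀ x ∈ Ioi a, 0 < f' x) :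
    StrictMonoOn f (Ici a) :=
  strictMonoOn_of_hasDerivWithinAt_pos (convex_Ici a)
    (fun x hx => (hf x hx).continuousAt.continuousWithinAt)
    (fun x hx => (hf x (interior_subset hx)).hasDerivWithinAt)
    (fun x hx => hpos x (by rwa [interior_Ici] at hx))

lemma strictMonoOn_Ici_of_deriv_pos_of_nonneg {f f' : ℝ → ℝ} {a : ℝ}
    (hf : ∀ x ∈ Ici a, HasDerivAt f (f' x) x) (ha : 0 ≤ f a)
    (hpos : ∀ x ∈ Ici a, 0 ≤ f x → 0 < f' x) :
    StrictMonoOn f (Ici a) := by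
  have hnonneg : ∀ x ∈ Ici a, 0 ≤ f x := by
    intro b hb
    have hfence := image_le_of_deriv_right_lt_deriv_boundary (f := fun x => -f x) (a := a) (b := b)
      (fun x hx => (hf x hx.1).continuousAt.neg.continuousWithinAt)
      (fun x hx => (hf x hx.1).neg.hasDerivWithinAt) (neg_nonpos.2 ha)
      (fun _ => hasDerivAt_const _ (0 : ℝ))
      (fun x hx hx0 => neg_neg_iff_pos.2 (hpos x hx.1 (neg_eq_zero.1 hx0).ge))
      (right_mem_Icc.2 hb)
    exact neg_nonpos.1 hfence
  exact strictMonoOn_Ici_of_hasDerivAt_pos hf fun x hx =>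
    hpos x (Ioi_subset_Ici_self hx) (hnonneg x (Ioi_subset_Ici_self hx))

lemma not_forall_mem_Ioo_of_deriv_gt {f f' : ℝ → ℝ} {a : ℝ}
    (hf : ∀ x ∈ Ici a, HasDerivAt f (f' x) x)
    (hgt : ∀ x ∈ Ici a, f x ^ 2 * (1 - f x) / (2 - 3 * f x) < f' x) :
    ¬ ∀ x ∈ Ici a, f x ∈ Ioo 0 (2 / 3) := by
  intro hrange
  set L : ℝ → ℝ := fun x => comparisonClock (f x) - x
  have hL : ∀ x ∈ Ici a, HasDerivAt L
      ((2 - 3 * f x) / (f x ^ 2 * (1 - f x)) * f' x - 1) x := fun x hx =>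
    ((hasDerivAt_comparisonClock (hrange x hx).1 (by linarith [(hrange x hx).2])).comp x
      (hf x hx)).sub (hasDerivAt_id x)
  have hL_mono : MonotoneOn L (Ici a) := by
    refine (strictMonoOn_Ici_of_hasDerivAt_pos hL fun x hx => ?_).monotoneOn
    obtain ⟨hf₀, hf₁⟩ := hrange x (mem_Ici.2 hx.le)
    have h := hgt x (mem_Ici.2 hx.le)
    rw [div_lt_iff₀ (by linarith)] at h
    rw [sub_pos, div_mul_eq_mul_div, one_lt_div (mul_pos (pow_pos hf₀ 2) (by linarith))]
    linarith
  set s := max a (a + comparisonClock (2 / 3) - comparisonClock (f a))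
  have hs : s ∈ Ici a := mem_Ici.2 (le_max_left _ _)
  have hbound := comparisonClock_lt (hrange s hs).1 (hrange s hs).2
  have hLs := hL_mono self_mem_Ici hs (le_max_left _ _)
  have : a + comparisonClock (2 / 3) - comparisonClock (f a) ≤ s := le_max_right _ _
  simp only [L] at hLs
  linarith

/-- if φ is C² on (0,∞) and for all t > 0 one has φ̇(t) < 2/3 and
φ̈(t) > φ̇(t)²(1 − φ̇(t))/(2 − 3φ̇(t)), then φ̇(t) < 0 for all t > 0. -/
theorem deriv_neg_of_posdef_conditions (φ : ℝ → ℝ) (hφ : ContDiffOn ℝ 2 φ (Set.Ioi 0))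
    (h1 : ∀ t : ℝ, 0 < t → deriv φ t < 2/3)
    (h2 : ∀ t : ℝ, 0 < t →
      deriv (deriv φ) t > (deriv φ t)^2 * (1 - deriv φ t) / (2 - 3 * deriv φ t)) :
    ∀ t : ℝ, 0 < t → deriv φ t < 0 := by
  have hφ' : ContDiffOn ℝ 1 (deriv φ) (Ioi 0) := hφ.deriv_of_isOpen isOpen_Ioi (by norm_num)
  have hderiv : ∀ x ∈ Ioi (0 : ℝ), HasDerivAt (deriv φ) (deriv (deriv φ) x) x := fun x hx =>
    ((hφ'.differentiableOn one_ne_zero x hx).differentiableAt (isOpen_Ioi.mem_nhds hx)).hasDerivAt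
  have hincr : ∀ x ∈ Ioi (0 : ℝ), 0 ≤ deriv φ x → 0 < deriv (deriv φ) x := fun x hx hfx =>
    lt_of_le_of_lt (div_nonneg (by nlinarith [h1 x hx]) (by linarith [h1 x hx])) (h2 x hx)
  intro t ht
  by_contra! hft
  have hmono := strictMonoOn_Ici_of_deriv_pos_of_nonneg (fun x hx => hderiv x (ht.trans_le hx))
    hft fun x hx => hincr x (ht.trans_le hx)
  have hlate : ∀ x ∈ Ici (t + 1), t < x := fun x hx => by linarith [mem_Ici.1 hx]
  refine not_forall_mem_Ioo_of_deriv_gt (fun x hx => hderiv x (ht.trans (hlate x hx)))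
    (fun x hx => h2 x (ht.trans (hlate x hx))) fun x hx => ?_
  exact ⟨hft.trans_lt (hmono self_mem_Ici (hlate x hx).le (hlate x hx)),
    h1 x (ht.trans (hlate x hx))⟩
end

section
/- Let φ : (0,∞) → ℝ be twice continuously differentiable and satisfy the ordinary differential equation 2φ̈ − φ̇² − 3φ̇φ̈ + φ̇³ = e^{2φ} on (0,∞). Then the function t ↦ e^{−φ(t)}·φ̇(t)²·(φ̇(t) − 1) + e^{φ(t)} is constant on (0,∞); equivalently, there is a constant c with φ̇²(φ̇ − 1) = −e^{2φ} + c·e^{φ}. -/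
/-!
With `p = φ̇` and `q = φ̈`, the function `F = e^{-φ} p² (p - 1) + e^{φ}` has derivative
`e^{-φ} p (e^{2φ} - (2q - p² - 3pq + p³))`, so the ODE makes `F' = 0` on the connected open set
`(0, ∞)`.
-/

open Set Real

noncomputable def expConeFirstIntegral (φ ψ : ℝ → ℝ) (t : ℝ) : ℝ :=
  exp (-φ t) * ψ t ^ 2 * (ψ t - 1) + exp (φ t)

theorem hasDerivAt_expConeFirstIntegral {φ ψ : ℝ → ℝ} {t q : ℝ}
    (hφ : HasDerivAt φ (ψ t) t) (hψ : HasDerivAt ψ q t) :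
    HasDerivAt (expConeFirstIntegral φ ψ)
      (exp (-φ t) * ψ t *
        (exp (2 * φ t) - (2 * q - ψ t ^ 2 - 3 * ψ t * q + ψ t ^ 3))) t := by
  have hexp : exp (φ t) = exp (-φ t) * exp (2 * φ t) := by
    rw [← exp_add]; ring_nf
  refine (((hφ.neg.exp.mul (hψ.pow 2)).mul (hψ.sub_const 1)).add hφ.exp).congr_deriv ?_
  simp only [Pi.neg_apply, Pi.pow_apply, Pi.mul_apply, hexp]
  ring

theorem eq_neg_exp_two_mul_add_of_exp_neg_mul_add_exp_eq {x a c : ℝ}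
    (h : exp (-x) * a + exp x = c) : a = -exp (2 * x) + c * exp x := by
  rw [← h, add_mul, mul_right_comm, ← exp_add, neg_add_cancel, exp_zero, one_mul, two_mul,
    exp_add]
  ring

/-- a first integral of the reduced Monge–Ampère ODE on the exponential
cone: if 2φ̈ − φ̇² − 3φ̇φ̈ + φ̇³ = e^{2φ} on (0,∞), then
e^{−φ}·φ̇²·(φ̇ − 1) + e^{φ} is constant, i.e., there is c with
φ̇²(φ̇ − 1) = −e^{2φ} + c·e^{φ}. -/
theorem first_integral_exp_cone_ode (φ : ℝ → ℝ) (hφ : ContDiffOn ℝ 2 φ (Set.Ioi 0))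
    (hode : ∀ t : ℝ, 0 < t →
      2 * deriv (deriv φ) t - (deriv φ t)^2 - 3 * deriv φ t * deriv (deriv φ) t
        + (deriv φ t)^3 = Real.exp (2 * φ t)) :
    ∃ c : ℝ, ∀ t : ℝ, 0 < t →
      Real.exp (-(φ t)) * (deriv φ t)^2 * (deriv φ t - 1) + Real.exp (φ t) = c ∧
      (deriv φ t)^2 * (deriv φ t - 1) = -Real.exp (2 * φ t) + c * Real.exp (φ t) := by
  have hderiv : ∀ t ∈ Ioi (0 : ℝ), HasDerivAt (expConeFirstIntegral φ (deriv φ)) 0 t := by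
    intro t ht
    have hnhds := isOpen_Ioi.mem_nhds ht
    have hφ' := hφ.deriv_of_isOpen isOpen_Ioi (by norm_num : (1 : WithTop ℕ∞) + 1 ≤ 2)
    have h := hasDerivAt_expConeFirstIntegral
      ((hφ.contDiffAt hnhds).differentiableAt two_ne_zero).hasDerivAt
      ((hφ'.contDiffAt hnhds).differentiableAt one_ne_zero).hasDerivAt
    rwa [hode t ht, sub_self, mul_zero] at h
  obtain ⟨c, hc⟩ := isOpen_Ioi.exists_is_const_of_deriv_eq_zero isPreconnected_Ioi
    (fun t ht => (hderiv t ht).differentiableAt.differentiableWithinAt)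
    (fun t ht => (hderiv t ht).deriv)
  refine ⟨c, fun t ht => ⟨hc t ht, ?_⟩⟩
  exact eq_neg_exp_two_mul_add_of_exp_neg_mul_add_exp_eq (by rw [← mul_assoc]; exact hc t ht)
end

section
/- For κ > 0 define t(κ) = (1/2)(log(1+κ) + 2κ) and φ̂(κ) = (1/2)(log(1+κ) − 3·log κ). Then t is a strictly increasing smooth bijection from (0,∞) onto (0,∞), and the function ψ = φ̂ ∘ t⁻¹ : (0,∞) → ℝ satisfies: (a) ψ'(t(κ)) = −1/κ < 0 for all κ > 0; (b) e^{2ψ(s)} = ψ'(s)²(1 − ψ'(s)) for all s > 0; (c) ψ satisfies the ordinary differential equation 2ψ'' − (ψ')² − 3ψ'ψ'' + (ψ')³ = e^{2ψ} on (0,∞); (d) lim_{s→0⁺} ψ(s) = +∞ and lim_{s→∞} ψ(s) = −∞. -/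
open Set Real Filter

noncomputable section ExpConeAux

/-- The parametrization t(κ). -/
def Tf : ℝ → ℝ := fun κ => (1/2) * (Real.log (1 + κ) + 2 * κ)

/-- The parametrization φ̂(κ). -/
def Pf : ℝ → ℝ := fun κ => (1/2) * (Real.log (1 + κ) - 3 * Real.log κ)

/-- Inverse of `Tf` on `(0,∞)`. -/
def Kf : ℝ → ℝ := fun s => Function.invFunOn Tf (Set.Ioi 0) s

/-- The solution ψ. -/
def psiF : ℝ → ℝ := Pf ∘ Kf

lemma hasDerivAt_Tf {κ : ℝ} (h : 0 < κ) :
    HasDerivAt Tf ((1/2) * (1/(1+κ) + 2)) κ := by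
  have h1 : (0:ℝ) < 1 + κ := by linarith
  have hid : HasDerivAt (fun κ : ℝ => 1 + κ) 1 κ := (hasDerivAt_id κ).const_add 1
  have hlog : HasDerivAt (fun κ : ℝ => Real.log (1+κ)) (1/(1+κ)) κ := by
    have := (Real.hasDerivAt_log h1.ne').comp κ hid
    simpa [one_div, Function.comp_def] using this
  have h2 : HasDerivAt (fun κ : ℝ => Real.log (1+κ) + 2*κ) (1/(1+κ) + 2) κ := by
    have hm : HasDerivAt (fun κ : ℝ => 2*κ) 2 κ := by
      simpa using (hasDerivAt_id κ).const_mul (2:ℝ)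
    exact hlog.add hm
  exact h2.const_mul (1/2 : ℝ)

lemma hasDerivAt_Pf {κ : ℝ} (h : 0 < κ) :
    HasDerivAt Pf ((1/2) * (1/(1+κ) - 3/κ)) κ := by
  have h1 : (0:ℝ) < 1 + κ := by linarith
  have hid : HasDerivAt (fun κ : ℝ => 1 + κ) 1 κ := (hasDerivAt_id κ).const_add 1
  have hlog : HasDerivAt (fun κ : ℝ => Real.log (1+κ)) (1/(1+κ)) κ := by
    have := (Real.hasDerivAt_log h1.ne').comp κ hid
    simpa [one_div, Function.comp_def] using this
  have hlog2 : HasDerivAt (fun κ : ℝ => 3 * Real.log κ) (3/κ) κ := by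
    have := (Real.hasDerivAt_log h.ne').const_mul (3:ℝ)
    simpa [div_eq_mul_inv] using this
  have h2 : HasDerivAt (fun κ : ℝ => Real.log (1+κ) - 3*Real.log κ)
      (1/(1+κ) - 3/κ) κ := hlog.sub hlog2
  exact h2.const_mul (1/2 : ℝ)

lemma Tf_deriv_pos {κ : ℝ} (h : 0 < κ) : 0 < (1/2) * (1/(1+κ) + 2) := by
  have h1 : (0:ℝ) < 1 + κ := by linarith
  have : 0 < 1/(1+κ) := by positivity
  linarith

lemma continuousAt_Tf {κ : ℝ} (h : (0:ℝ) ≤ κ) : ContinuousAt Tf κ := by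
  have h1 : (1:ℝ) + κ ≠ 0 := by linarith
  have hc : ContinuousAt (fun κ : ℝ => Real.log (1+κ)) κ :=
    (Real.continuousAt_log h1).comp ((continuous_const.add continuous_id).continuousAt)
  exact continuousAt_const.mul
    (hc.add ((continuous_const.mul continuous_id).continuousAt))

lemma Tf_zero : Tf 0 = 0 := by simp [Tf]

lemma le_Tf {κ : ℝ} (h : 0 ≤ κ) : κ ≤ Tf κ := by
  have : 0 ≤ Real.log (1+κ) := Real.log_nonneg (by linarith)
  simp only [Tf]; linarith

lemma strictMonoOn_Tf : StrictMonoOn Tf (Set.Ici 0) := by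
  apply strictMonoOn_of_deriv_pos (convex_Ici 0)
    (fun x hx => (continuousAt_Tf hx).continuousWithinAt)
  intro x hx
  rw [interior_Ici] at hx
  rw [(hasDerivAt_Tf hx).deriv]
  exact Tf_deriv_pos hx

lemma strictMonoOn_Tf' : StrictMonoOn Tf (Set.Ioi 0) :=
  strictMonoOn_Tf.mono Ioi_subset_Ici_self

lemma Tf_pos {κ : ℝ} (h : 0 < κ) : 0 < Tf κ := lt_of_lt_of_le h (le_Tf h.le)

lemma Tf_surj {s : ℝ} (hs : 0 < s) : ∃ κ ∈ Set.Ioi (0:ℝ), Tf κ = s := by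
  have hcont : ContinuousOn Tf (Set.Icc 0 s) := fun x hx =>
    (continuousAt_Tf hx.1).continuousWithinAt
  have hmem : s ∈ Set.Icc (Tf 0) (Tf s) := by
    rw [Tf_zero]; exact ⟨hs.le, le_Tf hs.le⟩
  obtain ⟨κ, hκ, hTκ⟩ := intermediate_value_Icc hs.le hcont hmem
  refine ⟨κ, ?_, hTκ⟩
  rcases hκ.1.lt_or_eq with h | h
  · exact h
  · exfalso; rw [← h, Tf_zero] at hTκ; exact hs.ne' hTκ.symm

lemma bijOn_Tf : Set.BijOn Tf (Set.Ioi 0) (Set.Ioi 0) :=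
  ⟨fun κ hκ => Tf_pos hκ, strictMonoOn_Tf'.injOn,
   fun s hs => by obtain ⟨κ, hκ, h⟩ := Tf_surj hs; exact ⟨κ, hκ, h⟩⟩

lemma Kf_mem {s : ℝ} (hs : 0 < s) : 0 < Kf s :=
  Function.invFunOn_mem (Tf_surj hs)

lemma Tf_Kf {s : ℝ} (hs : 0 < s) : Tf (Kf s) = s :=
  Function.invFunOn_eq (Tf_surj hs)

lemma Kf_Tf {κ : ℝ} (hκ : 0 < κ) : Kf (Tf κ) = κ :=
  strictMonoOn_Tf'.injOn.leftInvOn_invFunOn hκ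

lemma strictMonoOn_Kf : StrictMonoOn Kf (Set.Ioi 0) := by
  intro s₁ h₁ s₂ h₂ hlt
  by_contra h
  push_neg at h
  have : Tf (Kf s₂) ≤ Tf (Kf s₁) :=
    strictMonoOn_Tf'.monotoneOn (Kf_mem h₂) (Kf_mem h₁) h
  rw [Tf_Kf h₁, Tf_Kf h₂] at this
  exact absurd this (not_le.2 hlt)

lemma continuousAt_Kf {s : ℝ} (hs : 0 < s) : ContinuousAt Kf s := by
  rw [ContinuousAt]
  apply tendsto_order.2
  constructor
  · intro a ha
    set κ := Kf s with hκdef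
    have hκ : 0 < κ := Kf_mem hs
    set a' := max a (κ/2) with ha'
    have ha'pos : 0 < a' := lt_max_of_lt_right (by linarith)
    have ha'lt : a' < κ := max_lt ha (by linarith)
    have hT : Tf a' < s := by
      have := strictMonoOn_Tf' ha'pos (Kf_mem hs) ha'lt
      rwa [Tf_Kf hs] at this
    filter_upwards [Ioi_mem_nhds hT] with y hy
    have hy0 : 0 < y := lt_trans (Tf_pos ha'pos) hy
    have : Kf (Tf a') < Kf y := strictMonoOn_Kf (Tf_pos ha'pos) hy0 hy
    rw [Kf_Tf ha'pos] at this
    exact lt_of_le_of_lt (le_max_left _ _) this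
  · intro b hb
    have hκ : 0 < Kf s := Kf_mem hs
    have hb0 : 0 < b := lt_trans hκ hb
    have hT : s < Tf b := by
      have := strictMonoOn_Tf' (Kf_mem hs) hb0 hb
      rwa [Tf_Kf hs] at this
    filter_upwards [Ioo_mem_nhds hs hT] with y hy
    have : Kf y < Kf (Tf b) := strictMonoOn_Kf hy.1 (Tf_pos hb0) hy.2
    rwa [Kf_Tf hb0] at this

lemma hasDerivAt_Kf {s : ℝ} (hs : 0 < s) :
    HasDerivAt Kf ((1/2) * (1/(1+Kf s) + 2))⁻¹ s :=
  HasDerivAt.of_local_left_inverse (continuousAt_Kf hs)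
    (hasDerivAt_Tf (Kf_mem hs)) (Tf_deriv_pos (Kf_mem hs)).ne'
    (Filter.eventually_of_mem (Ioi_mem_nhds hs) fun y hy => Tf_Kf hy)

lemma hasDerivAt_psiF {s : ℝ} (hs : 0 < s) :
    HasDerivAt psiF (-1/(Kf s)) s := by
  have hκ : 0 < Kf s := Kf_mem hs
  have h1 : (0:ℝ) < 1 + Kf s := by linarith
  have : HasDerivAt psiF _ s := (hasDerivAt_Pf hκ).comp s (hasDerivAt_Kf hs)
  convert this using 1
  have hne : (1/(1+Kf s) + 2) ≠ 0 := by positivity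
  field_simp
  ring

lemma deriv_psiF {s : ℝ} (hs : 0 < s) : deriv psiF s = -1/(Kf s) :=
  (hasDerivAt_psiF hs).deriv

lemma deriv2_psiF {s : ℝ} (hs : 0 < s) :
    deriv (deriv psiF) s = ((1/2) * (1/(1+Kf s) + 2))⁻¹ / (Kf s)^2 := by
  have heq : deriv psiF =ᶠ[nhds s] fun y => -(Kf y)⁻¹ :=
    Filter.eventuallyEq_of_mem (Ioi_mem_nhds hs)
      (fun y hy => by rw [deriv_psiF hy]; simp [neg_div, one_div])
  rw [heq.deriv_eq]
  have hκ : (Kf s) ≠ 0 := (Kf_mem hs).ne'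
  have := ((hasDerivAt_Kf hs).inv hκ).neg
  rw [show (fun y => -(Kf y)⁻¹) = -Kf⁻¹ from rfl, this.deriv]
  field_simp

lemma exp_two_psiF {s : ℝ} (hs : 0 < s) :
    Real.exp (2 * psiF s) = (1 + Kf s) / (Kf s)^3 := by
  have hκ : 0 < Kf s := Kf_mem hs
  have h1 : (0:ℝ) < 1 + Kf s := by linarith
  have h3 : (3:ℝ) * Real.log (Kf s) = Real.log ((Kf s)^3) := by
    rw [Real.log_pow]; push_cast; ring
  have : 2 * psiF s = Real.log (1 + Kf s) - Real.log ((Kf s)^3) := by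
    simp only [psiF, Function.comp, Pf]
    rw [← h3]; ring
  rw [this, Real.exp_sub, Real.exp_log h1, Real.exp_log (by positivity)]

end ExpConeAux

/-- the c = 0 solution of the reduced Monge–Ampère equation for the
exponential cone, given parametrically by t(κ) = (1/2)(log(1+κ) + 2κ),
φ̂(κ) = (1/2)(log(1+κ) − 3 log κ). -/
theorem exp_cone_canonical_solution :
    let T : ℝ → ℝ := fun κ => (1/2) * (Real.log (1 + κ) + 2 * κ)
    let Φ : ℝ → ℝ := fun κ => (1/2) * (Real.log (1 + κ) - 3 * Real.log κ)
    StrictMonoOn T (Set.Ioi 0) ∧ ContDiffOn ℝ (⊤ : ℕ∞) T (Set.Ioi 0) ∧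
    Set.BijOn T (Set.Ioi 0) (Set.Ioi 0) ∧
    ∃ ψ : ℝ → ℝ,
      (∀ κ : ℝ, 0 < κ → ψ (T κ) = Φ κ) ∧
      (∀ κ : ℝ, 0 < κ → deriv ψ (T κ) = -1/κ ∧ deriv ψ (T κ) < 0) ∧
      (∀ s : ℝ, 0 < s → Real.exp (2 * ψ s) = (deriv ψ s)^2 * (1 - deriv ψ s)) ∧
      (∀ s : ℝ, 0 < s →
        2 * deriv (deriv ψ) s - (deriv ψ s)^2 - 3 * deriv ψ s * deriv (deriv ψ) s
          + (deriv ψ s)^3 = Real.exp (2 * ψ s)) ∧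
      Filter.Tendsto ψ (nhdsWithin 0 (Set.Ioi 0)) Filter.atTop ∧
      Filter.Tendsto ψ Filter.atTop Filter.atBot := by
  intro T Φ
  refine ⟨strictMonoOn_Tf', ?_, bijOn_Tf, psiF, ?_, ?_, ?_, ?_, ?_, ?_⟩
  · -- smoothness
    intro x hx
    have hx0 : (0:ℝ) < x := hx
    have h1 : (1:ℝ) + x ≠ 0 := by linarith
    have hc1 : ContDiffAt ℝ (⊤ : ℕ∞) (fun κ : ℝ => Real.log (1+κ)) x :=
      (Real.contDiffAt_log.2 h1).comp x ((contDiff_const.add contDiff_id).contDiffAt)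
    have hc2 : ContDiffAt ℝ (⊤ : ℕ∞) (fun κ : ℝ => 2*κ) x :=
      (contDiff_const.mul contDiff_id).contDiffAt
    exact ((contDiffAt_const.mul (hc1.add hc2)) :
      ContDiffAt ℝ (⊤ : ℕ∞) T x).contDiffWithinAt
  · -- ψ (T κ) = Φ κ
    intro κ hκ
    show psiF (Tf κ) = Pf κ
    simp [psiF, Kf_Tf hκ]
  · -- deriv
    intro κ hκ
    show deriv psiF (Tf κ) = -1/κ ∧ deriv psiF (Tf κ) < 0
    have hT : (0:ℝ) < Tf κ := Tf_pos hκ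
    have h1 : deriv psiF (Tf κ) = -1/κ := by
      rw [deriv_psiF hT, Kf_Tf hκ]
    exact ⟨h1, by rw [h1]; exact div_neg_of_neg_of_pos (by norm_num) hκ⟩
  · -- eq (b)
    intro s hs
    have hκ : 0 < Kf s := Kf_mem hs
    rw [exp_two_psiF hs, deriv_psiF hs]
    field_simp
    ring
  · -- ODE (c)
    intro s hs
    have hκ : 0 < Kf s := Kf_mem hs
    have h1 : (0:ℝ) < 1 + Kf s := by linarith
    have hne : (1/(1+Kf s) + 2) ≠ 0 := by positivity
    rw [exp_two_psiF hs, deriv_psiF hs, deriv2_psiF hs]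
    field_simp
    ring
  · -- limit at 0+
    have hK0 : Filter.Tendsto Kf (nhdsWithin 0 (Set.Ioi 0)) (nhdsWithin 0 (Set.Ioi 0)) := by
      rw [tendsto_nhdsWithin_iff]
      constructor
      · apply tendsto_order.2
        constructor
        · intro a ha
          filter_upwards [self_mem_nhdsWithin] with x hx
          exact lt_trans ha (Kf_mem hx)
        · intro b hb
          have hTb : 0 < Tf b := Tf_pos hb
          filter_upwards [Ioo_mem_nhdsGT_of_mem ⟨le_refl (0:ℝ), hTb⟩] with x hx
          have : Kf x < Kf (Tf b) := strictMonoOn_Kf hx.1 hTb hx.2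
          rwa [Kf_Tf hb] at this
      · filter_upwards [self_mem_nhdsWithin] with x hx
        exact Kf_mem hx
    have hP0 : Filter.Tendsto Pf (nhdsWithin 0 (Set.Ioi 0)) Filter.atTop := by
      have hlogtop : Filter.Tendsto (fun κ : ℝ => -3 * Real.log κ)
          (nhdsWithin 0 (Set.Ioi 0)) Filter.atTop :=
        (tendsto_const_mul_atTop_of_neg (by norm_num : (-3:ℝ) < 0)).2
          Real.tendsto_log_nhdsGT_zero
      have hlog1 : Filter.Tendsto (fun κ : ℝ => Real.log (1+κ))
          (nhdsWithin 0 (Set.Ioi 0)) (nhds 0) := by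
        have h : ContinuousAt (fun κ : ℝ => Real.log (1+κ)) 0 :=
          (Real.continuousAt_log (by norm_num)).comp
            ((continuous_const.add continuous_id).continuousAt)
        have h2 := h.tendsto.mono_left
          (nhdsWithin_le_nhds (s := Set.Ioi (0:ℝ)))
        simpa using h2
      have hsum : Filter.Tendsto (fun κ : ℝ => Real.log (1+κ) + (-3) * Real.log κ)
          (nhdsWithin 0 (Set.Ioi 0)) Filter.atTop := hlog1.add_atTop hlogtop
      have := (tendsto_const_mul_atTop_of_pos (by norm_num : (0:ℝ) < 1/2)).2 hsum
      apply this.congr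
      intro κ; simp only [Pf]; ring
    exact hP0.comp hK0
  · -- limit at ∞
    have hKtop : Filter.Tendsto Kf Filter.atTop Filter.atTop := by
      apply tendsto_atTop.2
      intro M
      set M' := max M 1 with hM'
      have hM'pos : (0:ℝ) < M' := lt_max_of_lt_right one_pos
      filter_upwards [eventually_ge_atTop (max (Tf M') 1)] with s hsge
      have hs0 : (0:ℝ) < s := lt_of_lt_of_le one_pos (le_trans (le_max_right _ _) hsge)
      have hTle : Tf M' ≤ s := le_trans (le_max_left _ _) hsge
      have : Kf (Tf M') ≤ Kf s :=
        strictMonoOn_Kf.monotoneOn (Tf_pos hM'pos) hs0 hTle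
      rw [Kf_Tf hM'pos] at this
      exact le_trans (le_max_left _ _) this
    have hPbot : Filter.Tendsto Pf Filter.atTop Filter.atBot := by
      apply tendsto_atBot_mono' Filter.atTop
        (f₁ := fun κ : ℝ => (1/2) * Real.log 2 + (- Real.log κ))
      · filter_upwards [eventually_ge_atTop (1:ℝ)] with κ hκ
        have hκ0 : (0:ℝ) < κ := lt_of_lt_of_le one_pos hκ
        have hlogκ : 0 ≤ Real.log κ := Real.log_nonneg hκ
        have hle : Real.log (1+κ) ≤ Real.log 2 + Real.log κ := by
          have h2 : Real.log (1+κ) ≤ Real.log (2*κ) :=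
            Real.log_le_log (by linarith) (by linarith)
          rwa [Real.log_mul (by norm_num) hκ0.ne'] at h2
        simp only [Pf]
        linarith
      · exact tendsto_atBot_add_const_left _ _
          (tendsto_neg_atBot_iff.2 Real.tendsto_log_atTop)
    exact hPbot.comp hKtop
end

section
/- Let p ∈ [2,∞), q = p/(p−1), let I ⊆ ℝ be an open interval, and let φ : I → ℝ be twice continuously differentiable. Then for all t ∈ I: (a) d/dt [e^{−φ(t)} φ̇(t)(tφ̇(t) + p + 1)(tφ̇(t) + q + 1)] = e^{−φ(t)}·(φ̈(t)(2(p+q) + 1 + 3tφ̇(t)) − φ̇(t)²(p + q − 1 + tφ̇(t)))·(1 + tφ̇(t)); (b) d/dt [(p+q)·t·e^{φ(t)}] = (p+q)·e^{φ(t)}·(1 + tφ̇(t)). Consequently, if φ satisfies the ordinary differential equation φ̈·(2(p+q) + 1 + 3tφ̇) − φ̇²·(p + q − 1 + tφ̇) = (p+q)·e^{2φ} on I, then the function t ↦ e^{−φ(t)} φ̇(t)(tφ̇(t) + p + 1)(tφ̇(t) + q + 1) − (p+q)·t·e^{φ(t)} is constant on I. -/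
open Set Real

/-- differentiation identities and a first integral for the reduced
Monge–Ampère ODE of the cones of power type. -/
theorem first_integral_power_cone_ode (p q : ℝ) (hp : 2 ≤ p) (hq : q = p / (p - 1))
    (I : Set ℝ) (hI : IsOpen I) (hI' : I.OrdConnected)
    (φ : ℝ → ℝ) (hφ : ContDiffOn ℝ 2 φ I) :
    (∀ t ∈ I,
      deriv (fun s => Real.exp (-(φ s)) * deriv φ s * (s * deriv φ s + p + 1)
          * (s * deriv φ s + q + 1)) t
        = Real.exp (-(φ t)) *
            (deriv (deriv φ) t * (2*(p+q) + 1 + 3 * t * deriv φ t)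
              - (deriv φ t)^2 * (p + q - 1 + t * deriv φ t)) * (1 + t * deriv φ t)) ∧
    (∀ t ∈ I,
      deriv (fun s => (p+q) * s * Real.exp (φ s)) t
        = (p+q) * Real.exp (φ t) * (1 + t * deriv φ t)) ∧
    ((∀ t ∈ I,
        deriv (deriv φ) t * (2*(p+q) + 1 + 3 * t * deriv φ t)
          - (deriv φ t)^2 * (p + q - 1 + t * deriv φ t) = (p+q) * Real.exp (2 * φ t)) →
      ∃ c : ℝ, ∀ t ∈ I,
        Real.exp (-(φ t)) * deriv φ t * (t * deriv φ t + p + 1) * (t * deriv φ t + q + 1)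
          - (p+q) * t * Real.exp (φ t) = c) := by
  have hp1 : p - 1 ≠ 0 := by linarith
  have hpq : p * q = p + q := by
    subst hq; field_simp; ring
  -- first derivatives
  have hφ1 : ∀ t ∈ I, HasDerivAt φ (deriv φ t) t := fun t ht =>
    ((hφ.differentiableOn (by norm_num)).differentiableAt (hI.mem_nhds ht)).hasDerivAt
  have hφd : ContDiffOn ℝ 1 (deriv φ) I := hφ.deriv_of_isOpen hI (by norm_num)
  have hφ2 : ∀ t ∈ I, HasDerivAt (deriv φ) (deriv (deriv φ) t) t := fun t ht =>
    ((hφd.differentiableOn (by norm_num)).differentiableAt (hI.mem_nhds ht)).hasDerivAt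
  -- derivative of the first function
  have hA : ∀ t ∈ I, HasDerivAt
      (fun s => Real.exp (-(φ s)) * deriv φ s * (s * deriv φ s + p + 1)
          * (s * deriv φ s + q + 1))
      (Real.exp (-(φ t)) *
            (deriv (deriv φ) t * (2*(p+q) + 1 + 3 * t * deriv φ t)
              - (deriv φ t)^2 * (p + q - 1 + t * deriv φ t)) * (1 + t * deriv φ t)) t := by
    intro t ht
    have h1 : HasDerivAt (fun s => Real.exp (-(φ s)))
        (Real.exp (-(φ t)) * -(deriv φ t)) t := ((hφ1 t ht).neg).exp
    have h3 : HasDerivAt (fun s => s * deriv φ s)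
        (1 * deriv φ t + t * deriv (deriv φ) t) t := (hasDerivAt_id t).mul (hφ2 t ht)
    have h := (((h1.mul (hφ2 t ht)).mul ((h3.add_const p).add_const 1)).mul ((h3.add_const q).add_const 1))
    have key : Real.exp (-(φ t)) *
            (deriv (deriv φ) t * (2*(p+q) + 1 + 3 * t * deriv φ t)
              - (deriv φ t)^2 * (p + q - 1 + t * deriv φ t)) * (1 + t * deriv φ t)
        = ((Real.exp (-(φ t)) * -(deriv φ t) * deriv φ t
              + Real.exp (-(φ t)) * deriv (deriv φ) t) * (t * deriv φ t + p + 1)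
            + Real.exp (-(φ t)) * deriv φ t * (1 * deriv φ t + t * deriv (deriv φ) t))
            * (t * deriv φ t + q + 1)
          + Real.exp (-(φ t)) * deriv φ t * (t * deriv φ t + p + 1)
            * (1 * deriv φ t + t * deriv (deriv φ) t) := by
      linear_combination (Real.exp (-(φ t)) * ((deriv φ t)^2 - deriv (deriv φ) t)) * hpq
    rw [key]
    exact h
  have hB : ∀ t ∈ I, HasDerivAt (fun s => (p+q) * s * Real.exp (φ s))
      ((p+q) * Real.exp (φ t) * (1 + t * deriv φ t)) t := by
    intro t ht
    have h := (((hasDerivAt_id t).const_mul (p+q)).mul (hφ1 t ht).exp)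
    simp only [id_eq] at h
    have key : (p+q) * Real.exp (φ t) * (1 + t * deriv φ t)
        = (p+q) * 1 * Real.exp (φ t) + (p+q) * t * (Real.exp (φ t) * deriv φ t) := by ring
    rw [key]
    exact h
  refine ⟨fun t ht => (hA t ht).deriv, fun t ht => (hB t ht).deriv, fun hode => ?_⟩
  rcases I.eq_empty_or_nonempty with rfl | ⟨t₀, ht₀⟩
  · exact ⟨0, fun t ht => absurd ht (by simp)⟩
  set G : ℝ → ℝ := fun t =>
    Real.exp (-(φ t)) * deriv φ t * (t * deriv φ t + p + 1) * (t * deriv φ t + q + 1)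
      - (p+q) * t * Real.exp (φ t) with hG
  have hG0 : ∀ t ∈ I, HasDerivAt G 0 t := by
    intro t ht
    have h := (hA t ht).sub (hB t ht)
    have key : Real.exp (-(φ t)) *
            (deriv (deriv φ) t * (2*(p+q) + 1 + 3 * t * deriv φ t)
              - (deriv φ t)^2 * (p + q - 1 + t * deriv φ t)) * (1 + t * deriv φ t)
          - (p+q) * Real.exp (φ t) * (1 + t * deriv φ t) = 0 := by
      rw [hode t ht]
      have : Real.exp (-(φ t)) * Real.exp (2 * φ t) = Real.exp (φ t) := by
        rw [← Real.exp_add]; ring_nf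
      linear_combination ((p+q) * (1 + t * deriv φ t)) * this
    rw [← key] at *
    exact h
  have hconv : Convex ℝ I := convex_iff_ordConnected.mpr hI'
  refine ⟨G t₀, fun t ht => ?_⟩
  refine hconv.is_const_of_fderivWithin_eq_zero
    (fun x hx => ((hG0 x hx).differentiableAt).differentiableWithinAt) (fun x hx => ?_) ht ht₀
  rw [fderivWithin_eq_fderiv (hI.uniqueDiffOn x hx) (hG0 x hx).differentiableAt,
    (hG0 x hx).hasFDerivAt.fderiv]
  ext
  simp
end

section
/- Let p ∈ [2,∞), q = p/(p−1) (so pq = p + q), let c₁, c₂ ∈ ℝ, and define F on the open positive orthant {(x,y,z) ∈ ℝ³ : x,y,z > 0} by F(x,y,z) = −((p+c₁)/p)·log x − ((q+c₁)/q)·log y + (c₁ − 1)·log z + c₂. Then the Hessian F'' is positive definite (at every point, equivalently at one point) if and only if −q < c₁ < 1; and F satisfies det F'' = e^{2F} on the whole orthant if and only if c₁ = 0 and c₂ = 0, in which case F(x,y,z) = −log(xyz). -/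
/-!
`F` is a weighted sum `∑ aᵢ log xᵢ + c` of logarithms of the coordinates, so its Hessian is
diagonal with entries `-aᵢ / xᵢ²`: it is positive definite exactly when every weight is negative,
and since `q ≤ p` the condition on the `x`-weight follows from the one on the `y`-weight.
Substituting `xᵢ = e^{sᵢ}` turns `det F'' = e^{2F}` into
`(∏ -aᵢ) e^{-2 ∑ sᵢ} = e^{2c + 2 ∑ aᵢ sᵢ}` for all `s`, an identity between exponentials of affine
functions of `s`; comparing coefficients forces `aᵢ = -1` and then `c = 0`.
-/

open Real

noncomputable def weightedLogSum {n : ℕ} (a : Fin n → ℝ) (c : ℝ) (v : Fin n → ℝ) : ℝ :=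
  ∑ i, a i * Real.log (v i) + c

namespace weightedLogSum

variable {n : ℕ} (a : Fin n → ℝ) (c : ℝ)

theorem hasFDerivAt {y : Fin n → ℝ} (hy : ∀ i, y i ≠ 0) :
    HasFDerivAt (weightedLogSum a c)
      (∑ i, (a i * (y i)⁻¹) • ContinuousLinearMap.proj (R := ℝ) (φ := fun _ => ℝ) i) y := by
  have hlog (i : Fin n) : HasFDerivAt (fun w : Fin n → ℝ => a i * Real.log (w i))
      ((a i * (y i)⁻¹) • ContinuousLinearMap.proj (R := ℝ) (φ := fun _ => ℝ) i) y := by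
    rw [mul_smul]
    exact ((Real.hasDerivAt_log (hy i)).comp_hasFDerivAt y
      (hasFDerivAt_apply (𝕜 := ℝ) i y)).const_mul _
  exact (HasFDerivAt.fun_sum fun i _ => hlog i).add_const c

theorem fderiv_single {y : Fin n → ℝ} (hy : ∀ i, y i ≠ 0) (j : Fin n) :
    fderiv ℝ (weightedLogSum a c) y (Pi.single j 1) = a j * (y j)⁻¹ := by
  simp [(hasFDerivAt a c hy).fderiv, Pi.single_apply]

theorem hessian_eq {v : Fin n → ℝ} (hv : ∀ i, v i ≠ 0) :
    hessian (weightedLogSum a c) v = Matrix.diagonal fun i => -a i / v i ^ 2 := by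
  ext i j
  have hnear : (fun y => fderiv ℝ (weightedLogSum a c) y (Pi.single j 1))
      =ᶠ[nhds v] fun y => a j * (y j)⁻¹ := by
    filter_upwards [Filter.eventually_all.2 fun i =>
      (continuous_apply i).continuousAt.eventually_ne (hv i)] with y hy
    exact fderiv_single a c hy j
  have hinv : HasFDerivAt (fun y : Fin n → ℝ => a j * (y j)⁻¹)
      (a j • -((v j) ^ 2)⁻¹ • ContinuousLinearMap.proj (R := ℝ) (φ := fun _ => ℝ) j) v :=
    ((hasDerivAt_inv (hv j)).comp_hasFDerivAt v (hasFDerivAt_apply j v)).const_mul _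
  rw [hessian, hnear.fderiv_eq, hinv.fderiv, Matrix.diagonal_apply]
  by_cases hij : i = j
  · subst hij
    simp only [FunLike.coe_smul, Pi.smul_apply, ContinuousLinearMap.proj_apply, Pi.single_eq_same,
      smul_eq_mul, mul_one, if_pos]
    ring
  · simp [hij, Ne.symm hij]

theorem posDef_hessian_iff {v : Fin n → ℝ} (hv : ∀ i, v i ≠ 0) :
    (hessian (weightedLogSum a c) v).PosDef ↔ ∀ i, a i < 0 := by
  rw [hessian_eq a c hv, Matrix.posDef_diagonal_iff]
  refine forall_congr' fun i => ?_
  rw [div_pos_iff_of_pos_right (by have := hv i; positivity), neg_pos]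

theorem posDef_hessian_on_orthant_iff :
    (∀ v : Fin n → ℝ, (∀ i, 0 < v i) → (hessian (weightedLogSum a c) v).PosDef) ↔
      ∀ i, a i < 0 :=
  ⟨fun h => (posDef_hessian_iff a c fun _ => one_ne_zero).1 (h 1 fun _ => one_pos),
    fun ha _ hv => (posDef_hessian_iff a c fun i => (hv i).ne').2 ha⟩

theorem apply_exp (s : Fin n → ℝ) :
    weightedLogSum a c (fun i => exp (s i)) = ∑ i, a i * s i + c := by
  simp [weightedLogSum]

theorem det_hessian_exp (s : Fin n → ℝ) :
    (hessian (weightedLogSum a c) fun i => exp (s i)).det =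
      (∏ i, -a i) * exp (-2 * ∑ i, s i) := by
  rw [hessian_eq a c fun i => (exp_pos _).ne', Matrix.det_diagonal, Finset.mul_sum, exp_sum,
    ← Finset.prod_mul_distrib]
  refine Finset.prod_congr rfl fun i _ => ?_
  rw [div_eq_mul_inv, ← exp_nat_mul, ← exp_neg]
  push_cast
  ring_nf

theorem det_hessian_eq_exp_iff :
    (∀ v : Fin n → ℝ, (∀ i, 0 < v i) →
        (hessian (weightedLogSum a c) v).det = exp (2 * weightedLogSum a c v)) ↔
      (∀ i, a i = -1) ∧ c = 0 := by
  constructor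
  · intro h
    have hexp (s : Fin n → ℝ) :
        (∏ i, -a i) * exp (-2 * ∑ i, s i) = exp (2 * (∑ i, a i * s i + c)) := by
      rw [← det_hessian_exp, ← apply_exp]
      exact h _ fun i => exp_pos _
    have hprod : ∏ i, -a i = exp (2 * c) := by simpa using hexp 0
    have ha (i : Fin n) : a i = -1 := by
      have := hexp (Pi.single i 1)
      rw [hprod, ← exp_add, exp_eq_exp] at this
      simp only [Pi.single_apply, Finset.sum_ite_eq', Finset.mem_univ, if_true, mul_one,
        mul_ite, mul_zero] at this
      linarith
    simpa [ha, eq_comm (a := (1 : ℝ))] using hprod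
  · rintro ⟨ha, rfl⟩ v hv
    have hv' : v = fun i => exp (Real.log (v i)) := funext fun i => (exp_log (hv i)).symm
    rw [hv', det_hessian_exp, apply_exp]
    simp [ha, Finset.sum_neg_distrib]

end weightedLogSum

/-- for the logarithmic ansatz
F(x,y,z) = −((p+c₁)/p)·log x − ((q+c₁)/q)·log y + (c₁−1)·log z + c₂ on the open positive
orthant, the Hessian is positive definite iff −q < c₁ < 1, and det F'' = e^{2F} holds on
the whole orthant iff c₁ = 0 and c₂ = 0, in which case F(x,y,z) = −log(xyz). -/
theorem orthant_solution_characterization (p q : ℝ) (hp : 2 ≤ p) (hq : q = p / (p - 1))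
    (c₁ c₂ : ℝ) (F : (Fin 3 → ℝ) → ℝ)
    (hF : ∀ v : Fin 3 → ℝ,
      F v = -((p + c₁)/p) * Real.log (v 0) - ((q + c₁)/q) * Real.log (v 1)
        + (c₁ - 1) * Real.log (v 2) + c₂) :
    ((∀ v : Fin 3 → ℝ, 0 < v 0 → 0 < v 1 → 0 < v 2 → (hessian F v).PosDef) ↔
      (-q < c₁ ∧ c₁ < 1)) ∧
    ((∀ v : Fin 3 → ℝ, 0 < v 0 → 0 < v 1 → 0 < v 2 →
        (hessian F v).det = Real.exp (2 * F v)) ↔ (c₁ = 0 ∧ c₂ = 0)) ∧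
    (c₁ = 0 → c₂ = 0 → ∀ v : Fin 3 → ℝ, 0 < v 0 → 0 < v 1 → 0 < v 2 →
      F v = -Real.log (v 0 * v 1 * v 2)) := by
  have hp0 : 0 < p := by linarith
  have hq0 : 0 < q := by rw [hq]; exact div_pos hp0 (by linarith)
  have hqp : q ≤ p := by rw [hq, div_le_iff₀ (by linarith)]; nlinarith
  have hFeq : F = weightedLogSum ![-((p + c₁)/p), -((q + c₁)/q), c₁ - 1] c₂ := by
    funext v
    simp only [hF, weightedLogSum, Fin.sum_univ_three, Matrix.cons_val_zero, Matrix.cons_val_one,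
      Matrix.cons_val_two, Matrix.tail_cons, Matrix.head_cons]
    ring
  have horthant (P : (Fin 3 → ℝ) → Prop) :
      (∀ v : Fin 3 → ℝ, 0 < v 0 → 0 < v 1 → 0 < v 2 → P v) ↔ ∀ v, (∀ i, 0 < v i) → P v := by
    simp [Fin.forall_fin_succ]
  refine ⟨?_, ?_, ?_⟩
  · rw [hFeq, horthant, weightedLogSum.posDef_hessian_on_orthant_iff, Fin.forall_fin_succ,
      Fin.forall_fin_succ, Fin.forall_fin_succ]
    simp only [Fin.isValue, Matrix.cons_val_zero, Matrix.cons_val_one, Matrix.cons_val_two,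
      Matrix.tail_cons, Matrix.head_cons, Fin.succ_zero_eq_one, Fin.succ_one_eq_two,
      Left.neg_neg_iff, div_pos_iff_of_pos_right hp0, div_pos_iff_of_pos_right hq0, sub_neg,
      IsEmpty.forall_iff, and_true]
    exact ⟨fun ⟨_, h, h'⟩ => ⟨by linarith, h'⟩, fun ⟨h, h'⟩ => ⟨by linarith, by linarith, h'⟩⟩
  · rw [hFeq, horthant, weightedLogSum.det_hessian_eq_exp_iff]
    refine and_congr_left fun _ => ⟨fun ha => by simpa using ha 2, ?_⟩
    rintro rfl i
    fin_cases i <;> simp [hp0.ne', hq0.ne']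
  · rintro rfl rfl v h0 h1 h2
    rw [hF, log_mul (by positivity) h2.ne', log_mul h0.ne' h1.ne']
    simp only [add_zero, div_self hp0.ne', div_self hq0.ne']
    ring
end

section
/- Let p ∈ [2,∞), q = p/(p−1). For ζ ∈ ℝ define t(ζ) = (ζ² + p + 1)^{−1/(2p)} (ζ² + q + 1)^{−1/(2q)} ζ and φ̂(ζ) = −(1/2)·log(p+q) + ((p+1)/(2p))·log(ζ² + p + 1) + ((q+1)/(2q))·log(ζ² + q + 1). Then t is a strictly increasing smooth bijection from ℝ onto (−1,1), and the function ψ = φ̂ ∘ t⁻¹ : (−1,1) → ℝ satisfies: (a) ψ is even, i.e., ψ(−s) = ψ(s); (b) s·ψ'(s) = ζ² at s = t(ζ) for every ζ ∈ ℝ; (c) (p+q)·s²·e^{2ψ(s)} = sψ'(s)·(sψ'(s) + p + 1)·(sψ'(s) + q + 1) for all s ∈ (−1,1); (d) ψ satisfies the ordinary differential equation ψ''·(2(p+q) + 1 + 3sψ') − (ψ')²·(p + q − 1 + sψ') = (p+q)·e^{2ψ} on (−1,1); (e) lim_{s→±1} ψ(s) = +∞. -/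
open Set Real Filter

namespace PCAux

noncomputable def Tf (p q ζ : ℝ) : ℝ :=
  (ζ^2 + p + 1) ^ (-1/(2*p)) * (ζ^2 + q + 1) ^ (-1/(2*q)) * ζ

noncomputable def Pf (p q ζ : ℝ) : ℝ := -(1/2) * Real.log (p + q)
  + ((p+1)/(2*p)) * Real.log (ζ^2 + p + 1) + ((q+1)/(2*q)) * Real.log (ζ^2 + q + 1)

noncomputable def Vf (p q ζ : ℝ) : ℝ :=
  (p+1)/(p*(ζ^2+p+1)) + (q+1)/(q*(ζ^2+q+1))

noncomputable def Df (p q ζ : ℝ) : ℝ :=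
  ζ * (ζ^2+p+1)^(1/(2*p)) * (ζ^2+q+1)^(1/(2*q))

noncomputable def Td (p q ζ : ℝ) : ℝ :=
  (ζ^2+p+1)^(-1/(2*p)) * (ζ^2+q+1)^(-1/(2*q)) * Vf p q ζ

variable {p q ζ : ℝ}

lemma A_pos (hp0 : 0 < p) : 0 < ζ^2 + p + 1 := by nlinarith [sq_nonneg ζ]

lemma Vf_pos (hp0 : 0 < p) (hq0 : 0 < q) : 0 < Vf p q ζ := by
  have hA := A_pos (ζ := ζ) hp0
  have hB := A_pos (ζ := ζ) hq0
  have h1 : 0 < (p+1)/(p*(ζ^2+p+1)) := by positivity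
  have h2 : 0 < (q+1)/(q*(ζ^2+q+1)) := by positivity
  exact add_pos h1 h2

lemma Td_pos (hp0 : 0 < p) (hq0 : 0 < q) : 0 < Td p q ζ := by
  have hA := A_pos (ζ := ζ) hp0
  have hB := A_pos (ζ := ζ) hq0
  have hV := Vf_pos (ζ := ζ) hp0 hq0
  have h1 : (0:ℝ) < (ζ^2+p+1) ^ (-1/(2*p)) := Real.rpow_pos_of_pos hA _
  have h2 : (0:ℝ) < (ζ^2+q+1) ^ (-1/(2*q)) := Real.rpow_pos_of_pos hB _
  exact mul_pos (mul_pos h1 h2) hV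

lemma hasDerivAt_sq_add (c : ℝ) : HasDerivAt (fun ζ : ℝ => ζ^2 + c + 1) (2*ζ) ζ := by
  simpa using ((hasDerivAt_pow 2 ζ).add_const c).add_const 1

lemma hasDerivAt_Tf (hp0 : 0 < p) (hq0 : 0 < q) (hpq : p*q = p+q) :
    HasDerivAt (fun ζ => Tf p q ζ) (Td p q ζ) ζ := by
  have hA := A_pos (ζ := ζ) hp0
  have hB := A_pos (ζ := ζ) hq0
  have h1 : HasDerivAt (fun ζ : ℝ => (ζ^2+p+1) ^ (-1/(2*p)))
      ((2*ζ) * (-1/(2*p)) * (ζ^2+p+1) ^ (-1/(2*p) - 1)) ζ :=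
    (hasDerivAt_sq_add p).rpow_const (Or.inl hA.ne')
  have h2 : HasDerivAt (fun ζ : ℝ => (ζ^2+q+1) ^ (-1/(2*q)))
      ((2*ζ) * (-1/(2*q)) * (ζ^2+q+1) ^ (-1/(2*q) - 1)) ζ :=
    (hasDerivAt_sq_add q).rpow_const (Or.inl hB.ne')
  have h3 := (h1.mul h2).mul (hasDerivAt_id ζ)
  refine h3.congr_deriv ?_; symm; simp only [Pi.mul_apply, id]
  rw [Real.rpow_sub hA, Real.rpow_sub hB, Real.rpow_one, Real.rpow_one]
  unfold Td Vf
  have hxA : (0:ℝ) < (ζ^2+p+1) ^ (-1/(2*p)) := Real.rpow_pos_of_pos hA _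
  have hyB : (0:ℝ) < (ζ^2+q+1) ^ (-1/(2*q)) := Real.rpow_pos_of_pos hB _
  field_simp
  linear_combination (-(ζ^2+p+1)*(ζ^2+q+1)) * hpq

lemma strictMono_Tf (hp0 : 0 < p) (hq0 : 0 < q) (hpq : p*q = p+q) :
    StrictMono (fun ζ => Tf p q ζ) :=
  strictMono_of_deriv_pos fun ζ => by
    rw [(hasDerivAt_Tf hp0 hq0 hpq).deriv]; exact Td_pos hp0 hq0

lemma contDiff_Tf (hp0 : 0 < p) (hq0 : 0 < q) :
    ContDiff ℝ (⊤ : ℕ∞) (fun ζ => Tf p q ζ) := by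
  rw [contDiff_iff_contDiffAt]
  intro ζ
  have hA := A_pos (ζ := ζ) hp0
  have hB := A_pos (ζ := ζ) hq0
  have hcA : ContDiffAt ℝ (⊤ : ℕ∞) (fun ζ : ℝ => ζ^2+p+1) ζ := by
    fun_prop
  have hcB : ContDiffAt ℝ (⊤ : ℕ∞) (fun ζ : ℝ => ζ^2+q+1) ζ := by
    fun_prop
  exact ((hcA.rpow_const_of_ne hA.ne').mul (hcB.rpow_const_of_ne hB.ne')).mul contDiffAt_id

lemma hasDerivAt_Pf (hp0 : 0 < p) (hq0 : 0 < q) :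
    HasDerivAt (fun ζ => Pf p q ζ) (ζ * Vf p q ζ) ζ := by
  have hA := A_pos (ζ := ζ) hp0
  have hB := A_pos (ζ := ζ) hq0
  have h1 : HasDerivAt (fun ζ : ℝ => Real.log (ζ^2+p+1)) (2*ζ/(ζ^2+p+1)) ζ :=
    (hasDerivAt_sq_add p).log hA.ne'
  have h2 : HasDerivAt (fun ζ : ℝ => Real.log (ζ^2+q+1)) (2*ζ/(ζ^2+q+1)) ζ :=
    (hasDerivAt_sq_add q).log hB.ne'
  have h3 := ((h1.const_mul ((p+1)/(2*p))).const_add (-(1/2) * Real.log (p + q))).add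
    (h2.const_mul ((q+1)/(2*q)))
  refine h3.congr_deriv ?_; symm
  unfold Vf
  field_simp

lemma hasDerivAt_Df (hp0 : 0 < p) (hq0 : 0 < q) (hpq : p*q = p+q) :
    HasDerivAt (fun ζ => Df p q ζ)
      ((ζ^2+p+1)^(1/(2*p)) * (ζ^2+q+1)^(1/(2*q)) * (2 - Vf p q ζ)) ζ := by
  have hA := A_pos (ζ := ζ) hp0
  have hB := A_pos (ζ := ζ) hq0
  have h1 : HasDerivAt (fun ζ : ℝ => (ζ^2+p+1) ^ (1/(2*p)))
      ((2*ζ) * (1/(2*p)) * (ζ^2+p+1) ^ (1/(2*p) - 1)) ζ :=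
    (hasDerivAt_sq_add p).rpow_const (Or.inl hA.ne')
  have h2 : HasDerivAt (fun ζ : ℝ => (ζ^2+q+1) ^ (1/(2*q)))
      ((2*ζ) * (1/(2*q)) * (ζ^2+q+1) ^ (1/(2*q) - 1)) ζ :=
    (hasDerivAt_sq_add q).rpow_const (Or.inl hB.ne')
  have h3 := ((hasDerivAt_id ζ).mul h1).mul h2
  refine h3.congr_deriv ?_; symm; simp only [Pi.mul_apply, id]
  rw [Real.rpow_sub hA, Real.rpow_sub hB, Real.rpow_one, Real.rpow_one]
  unfold Vf
  have hxA : (0:ℝ) < (ζ^2+p+1) ^ (1/(2*p)) := Real.rpow_pos_of_pos hA _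
  have hyB : (0:ℝ) < (ζ^2+q+1) ^ (1/(2*q)) := Real.rpow_pos_of_pos hB _
  field_simp
  linear_combination ((ζ^2+p+1)*(ζ^2+q+1)) * hpq

lemma Tf_neg (p q ζ : ℝ) : Tf p q (-ζ) = - Tf p q ζ := by
  unfold Tf
  rw [show (-ζ)^2 = ζ^2 by ring]
  ring

lemma Tf_mem_Ioo (hp0 : 0 < p) (hq0 : 0 < q) (hpq : p*q = p+q) :
    Tf p q ζ ∈ Set.Ioo (-1 : ℝ) 1 := by
  have hA := A_pos (ζ := ζ) hp0
  have hB := A_pos (ζ := ζ) hq0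
  have hsq : (Tf p q ζ)^2 < 1 := by
    have hxA : (0:ℝ) < (ζ^2+p+1) ^ (1/(2*p)) := Real.rpow_pos_of_pos hA _
    have hyB : (0:ℝ) < (ζ^2+q+1) ^ (1/(2*q)) := Real.rpow_pos_of_pos hB _
    have hT2 : (Tf p q ζ)^2
        = ζ^2 / (((ζ^2+p+1) ^ (1/(2*p)))^2 * ((ζ^2+q+1) ^ (1/(2*q)))^2) := by
      unfold Tf
      rw [show (-1/(2*p)) = -(1/(2*p)) by ring, show (-1/(2*q)) = -(1/(2*q)) by ring,
        Real.rpow_neg hA.le, Real.rpow_neg hB.le]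
      rw [eq_div_iff (by positivity)]
      field_simp
    rw [hT2, div_lt_one (by positivity)]
    have hlt : ζ^2 < (ζ^2+p+1) ^ (1/p) * (ζ^2+q+1) ^ (1/q) := by
      rcases eq_or_ne ζ 0 with h0 | h0
      · subst h0
        have h00 : ((0:ℝ))^2 = 0 := by norm_num
        rw [h00]
        positivity
      · have hz2 : (0:ℝ) < ζ^2 := by positivity
        have e1 : (ζ^2 : ℝ) = (ζ^2) ^ (1/p) * (ζ^2) ^ (1/q) := by
          rw [← Real.rpow_add hz2]
          rw [show 1/p + 1/q = 1 by field_simp; linarith [hpq], Real.rpow_one]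
        have l1 : (ζ^2 : ℝ) ^ (1/p) < (ζ^2+p+1) ^ (1/p) :=
          Real.rpow_lt_rpow (by positivity) (by linarith) (by positivity)
        have l2 : (ζ^2 : ℝ) ^ (1/q) < (ζ^2+q+1) ^ (1/q) :=
          Real.rpow_lt_rpow (by positivity) (by linarith) (by positivity)
        calc (ζ^2:ℝ) = (ζ^2) ^ (1/p) * (ζ^2) ^ (1/q) := e1
          _ < (ζ^2+p+1) ^ (1/p) * (ζ^2+q+1) ^ (1/q) :=
            mul_lt_mul'' l1 l2 (by positivity) (by positivity)
    calc ζ^2 < (ζ^2+p+1) ^ (1/p) * (ζ^2+q+1) ^ (1/q) := hlt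
      _ = ((ζ^2+p+1) ^ (1/(2*p)))^2 * ((ζ^2+q+1) ^ (1/(2*q)))^2 := by
        rw [← Real.rpow_natCast ((ζ^2+p+1) ^ (1/(2*p))) 2,
          ← Real.rpow_natCast ((ζ^2+q+1) ^ (1/(2*q))) 2,
          ← Real.rpow_mul hA.le, ← Real.rpow_mul hB.le]
        norm_num
        ring_nf
  have := abs_lt.1 ((sq_lt_one_iff_abs_lt_one (Tf p q ζ)).mp hsq)
  exact ⟨this.1, this.2⟩

lemma one_div_add (hp0 : 0 < p) (hq0 : 0 < q) (hpq : p*q = p+q) :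
    1/(2*p) + 1/(2*q) = 1/2 := by field_simp; linarith [hpq]

lemma tendsto_Tf_atTop (hp0 : 0 < p) (hq0 : 0 < q) (hpq : p*q = p+q) :
    Tendsto (fun ζ => Tf p q ζ) atTop (nhds 1) := by
  have key : ∀ ζ : ℝ, 0 < ζ →
      Tf p q ζ = (1+(p+1)/ζ^2) ^ (-1/(2*p)) * (1+(q+1)/ζ^2) ^ (-1/(2*q)) := by
    intro ζ hζ
    have hz2 : (0:ℝ) < ζ^2 := by positivity
    have hA := A_pos (ζ := ζ) hp0
    have hB := A_pos (ζ := ζ) hq0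
    have e1 : (1+(p+1)/ζ^2 : ℝ) = (ζ^2+p+1)/ζ^2 := by field_simp; ring
    have e2 : (1+(q+1)/ζ^2 : ℝ) = (ζ^2+q+1)/ζ^2 := by field_simp; ring
    rw [e1, e2, Real.div_rpow hA.le hz2.le, Real.div_rpow hB.le hz2.le]
    unfold Tf
    rw [div_mul_div_comm]
    rw [← Real.rpow_natCast ζ 2, ← Real.rpow_mul hζ.le, ← Real.rpow_mul hζ.le,
      ← Real.rpow_add hζ]
    have h12 : (2:ℝ) * (-1/(2*p)) + 2 * (-1/(2*q)) = -1 := by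
      field_simp
      linarith [hpq]
    push_cast
    rw [h12, Real.rpow_neg_one]
    field_simp
  have l1 : Tendsto (fun ζ : ℝ => 1+(p+1)/ζ^2) atTop (nhds 1) := by
    have : Tendsto (fun ζ : ℝ => (p+1)/ζ^2) atTop (nhds 0) :=
      Tendsto.div_atTop tendsto_const_nhds (tendsto_pow_atTop two_ne_zero)
    simpa using tendsto_const_nhds.add this
  have l2 : Tendsto (fun ζ : ℝ => 1+(q+1)/ζ^2) atTop (nhds 1) := by
    have : Tendsto (fun ζ : ℝ => (q+1)/ζ^2) atTop (nhds 0) :=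
      Tendsto.div_atTop tendsto_const_nhds (tendsto_pow_atTop two_ne_zero)
    simpa using tendsto_const_nhds.add this
  have c1 : Tendsto (fun x : ℝ => x ^ (-1/(2*p))) (nhds 1) (nhds 1) := by
    have := (Real.continuousAt_rpow_const 1 (-1/(2*p)) (Or.inl one_ne_zero)).tendsto
    simpa using this
  have c2 : Tendsto (fun x : ℝ => x ^ (-1/(2*q))) (nhds 1) (nhds 1) := by
    have := (Real.continuousAt_rpow_const 1 (-1/(2*q)) (Or.inl one_ne_zero)).tendsto
    simpa using this
  have : Tendsto (fun ζ : ℝ => (1+(p+1)/ζ^2) ^ (-1/(2*p)) * (1+(q+1)/ζ^2) ^ (-1/(2*q)))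
      atTop (nhds 1) := by
    simpa using (c1.comp l1).mul (c2.comp l2)
  refine Tendsto.congr' ?_ this
  filter_upwards [eventually_gt_atTop (0:ℝ)] with ζ hζ
  exact (key ζ hζ).symm

lemma tendsto_Tf_atBot (hp0 : 0 < p) (hq0 : 0 < q) (hpq : p*q = p+q) :
    Tendsto (fun ζ => Tf p q ζ) atBot (nhds (-1)) := by
  have h := (tendsto_Tf_atTop hp0 hq0 hpq).comp tendsto_neg_atBot_atTop
  have h2 : Tendsto (fun ζ : ℝ => - Tf p q (-ζ)) atBot (nhds (-1)) := by
    simpa using h.neg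
  refine Tendsto.congr ?_ h2
  intro ζ; rw [Tf_neg]; ring

lemma range_Tf (hp0 : 0 < p) (hq0 : 0 < q) (hpq : p*q = p+q) :
    Set.range (fun ζ => Tf p q ζ) = Set.Ioo (-1 : ℝ) 1 := by
  apply Set.Subset.antisymm
  · rintro s ⟨ζ, rfl⟩
    exact Tf_mem_Ioo hp0 hq0 hpq
  · rintro x ⟨hx1, hx2⟩
    have ha : ∀ᶠ ζ in atBot, Tf p q ζ < x :=
      (tendsto_Tf_atBot hp0 hq0 hpq).eventually_lt_const hx1
    have hb : ∀ᶠ ζ in atTop, x < Tf p q ζ :=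
      (tendsto_Tf_atTop hp0 hq0 hpq).eventually_const_lt hx2
    obtain ⟨a, ha⟩ := ha.exists
    obtain ⟨b, hb⟩ := hb.exists
    have hab : a ≤ b := by
      by_contra h
      push_neg at h
      have := (strictMono_Tf hp0 hq0 hpq) h
      simp only at this
      linarith
    have := intermediate_value_Icc hab ((contDiff_Tf hp0 hq0).continuous.continuousOn)
    obtain ⟨ζ, _, hζ⟩ := this ⟨ha.le, hb.le⟩
    exact ⟨ζ, hζ⟩

noncomputable def gf (p q : ℝ) : ℝ → ℝ := Function.invFun (fun ζ => Tf p q ζ)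

noncomputable def ψf (p q : ℝ) (s : ℝ) : ℝ := Pf p q (gf p q s)

lemma gf_Tf (hp0 : 0 < p) (hq0 : 0 < q) (hpq : p*q = p+q) (ζ : ℝ) :
    gf p q (Tf p q ζ) = ζ :=
  Function.leftInverse_invFun (strictMono_Tf hp0 hq0 hpq).injective ζ

lemma Tf_gf (hp0 : 0 < p) (hq0 : 0 < q) (hpq : p*q = p+q) {s : ℝ}
    (hs : s ∈ Set.Ioo (-1:ℝ) 1) : Tf p q (gf p q s) = s := by
  have : s ∈ Set.range (fun ζ => Tf p q ζ) := by rw [range_Tf hp0 hq0 hpq]; exact hs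
  exact Function.invFun_eq this

lemma continuousAt_gf (hp0 : 0 < p) (hq0 : 0 < q) (hpq : p*q = p+q) :
    ContinuousAt (gf p q) (Tf p q ζ) := by
  have hmono := strictMono_Tf hp0 hq0 hpq
  rw [ContinuousAt, gf_Tf hp0 hq0 hpq, tendsto_order]
  constructor
  · intro c hc
    have h1 : Tf p q c < Tf p q ζ := hmono hc
    have h2 : Set.Ioo (Tf p q c) 1 ∈ nhds (Tf p q ζ) :=
      isOpen_Ioo.mem_nhds ⟨h1, (Tf_mem_Ioo hp0 hq0 hpq).2⟩
    filter_upwards [h2] with s hs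
    have hs' : s ∈ Set.Ioo (-1:ℝ) 1 :=
      ⟨lt_trans (Tf_mem_Ioo (ζ := c) hp0 hq0 hpq).1 hs.1, hs.2⟩
    obtain ⟨ζ', hζ'⟩ : s ∈ Set.range (fun ζ => Tf p q ζ) := by
      rw [range_Tf hp0 hq0 hpq]; exact hs'
    replace hζ' : Tf p q ζ' = s := hζ'
    have hlt : c < ζ' := hmono.lt_iff_lt.mp (show Tf p q c < Tf p q ζ' by rw [hζ']; exact hs.1)
    rw [← hζ', gf_Tf hp0 hq0 hpq]
    exact hlt
  · intro c hc
    have h1 : Tf p q ζ < Tf p q c := hmono hc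
    have h2 : Set.Ioo (-1 : ℝ) (Tf p q c) ∈ nhds (Tf p q ζ) :=
      isOpen_Ioo.mem_nhds ⟨(Tf_mem_Ioo hp0 hq0 hpq).1, h1⟩
    filter_upwards [h2] with s hs
    have hs' : s ∈ Set.Ioo (-1:ℝ) 1 :=
      ⟨hs.1, lt_trans hs.2 (Tf_mem_Ioo (ζ := c) hp0 hq0 hpq).2⟩
    obtain ⟨ζ', hζ'⟩ : s ∈ Set.range (fun ζ => Tf p q ζ) := by
      rw [range_Tf hp0 hq0 hpq]; exact hs'
    replace hζ' : Tf p q ζ' = s := hζ'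
    have hlt : ζ' < c := hmono.lt_iff_lt.mp (show Tf p q ζ' < Tf p q c by rw [hζ']; exact hs.2)
    rw [← hζ', gf_Tf hp0 hq0 hpq]
    exact hlt

lemma hasDerivAt_gf (hp0 : 0 < p) (hq0 : 0 < q) (hpq : p*q = p+q) :
    HasDerivAt (gf p q) (Td p q ζ)⁻¹ (Tf p q ζ) := by
  refine HasDerivAt.of_local_left_inverse (f := fun ζ => Tf p q ζ)
    (continuousAt_gf hp0 hq0 hpq) ?_ (Td_pos hp0 hq0).ne' ?_
  · rw [gf_Tf hp0 hq0 hpq]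
    exact hasDerivAt_Tf hp0 hq0 hpq
  · filter_upwards [isOpen_Ioo.mem_nhds (Tf_mem_Ioo (ζ := ζ) hp0 hq0 hpq)] with s hs
    exact Tf_gf hp0 hq0 hpq hs

lemma D_eq (hp0 : 0 < p) (hq0 : 0 < q) :
    ζ * Vf p q ζ * (Td p q ζ)⁻¹ = Df p q ζ := by
  have hA := A_pos (ζ := ζ) hp0
  have hB := A_pos (ζ := ζ) hq0
  have hV := Vf_pos (ζ := ζ) hp0 hq0
  have hxA : (0:ℝ) < (ζ^2+p+1) ^ (1/(2*p)) := Real.rpow_pos_of_pos hA _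
  have hyB : (0:ℝ) < (ζ^2+q+1) ^ (1/(2*q)) := Real.rpow_pos_of_pos hB _
  unfold Td Df
  rw [show (-1/(2*p)) = -(1/(2*p)) by ring, show (-1/(2*q)) = -(1/(2*q)) by ring,
    Real.rpow_neg hA.le, Real.rpow_neg hB.le]
  field_simp

lemma hasDerivAt_ψf (hp0 : 0 < p) (hq0 : 0 < q) (hpq : p*q = p+q) :
    HasDerivAt (ψf p q) (Df p q ζ) (Tf p q ζ) := by
  have h1 : HasDerivAt (fun ζ => Pf p q ζ)
      (gf p q (Tf p q ζ) * Vf p q (gf p q (Tf p q ζ))) (gf p q (Tf p q ζ)) :=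
    hasDerivAt_Pf hp0 hq0
  have h2 := h1.comp (Tf p q ζ) (hasDerivAt_gf hp0 hq0 hpq)
  rw [gf_Tf hp0 hq0 hpq] at h2
  have h3 : HasDerivAt (ψf p q) (ζ * Vf p q ζ * (Td p q ζ)⁻¹) (Tf p q ζ) := h2
  rw [D_eq hp0 hq0] at h3
  exact h3

lemma deriv_ψf (hp0 : 0 < p) (hq0 : 0 < q) (hpq : p*q = p+q) :
    deriv (ψf p q) (Tf p q ζ) = Df p q ζ :=
  (hasDerivAt_ψf hp0 hq0 hpq).deriv

lemma deriv2_ψf (hp0 : 0 < p) (hq0 : 0 < q) (hpq : p*q = p+q) :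
    deriv (deriv (ψf p q)) (Tf p q ζ)
      = (ζ^2+p+1)^(1/(2*p)) * (ζ^2+q+1)^(1/(2*q)) * (2 - Vf p q ζ) * (Td p q ζ)⁻¹ := by
  have hev : deriv (ψf p q) =ᶠ[nhds (Tf p q ζ)] fun s => Df p q (gf p q s) := by
    filter_upwards [isOpen_Ioo.mem_nhds (Tf_mem_Ioo (ζ := ζ) hp0 hq0 hpq)] with s hs
    obtain ⟨ζ', hζ'⟩ : s ∈ Set.range (fun ζ => Tf p q ζ) := by
      rw [range_Tf hp0 hq0 hpq]; exact hs
    replace hζ' : Tf p q ζ' = s := hζ'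
    rw [← hζ', deriv_ψf hp0 hq0 hpq, gf_Tf hp0 hq0 hpq]
  rw [hev.deriv_eq]
  have h1 : HasDerivAt (fun ζ => Df p q ζ)
      ((ζ^2+p+1)^(1/(2*p)) * (ζ^2+q+1)^(1/(2*q)) * (2 - Vf p q ζ))
      (gf p q (Tf p q ζ)) := by
    rw [gf_Tf hp0 hq0 hpq]
    exact hasDerivAt_Df hp0 hq0 hpq
  have h2 := h1.comp (Tf p q ζ) (hasDerivAt_gf hp0 hq0 hpq)
  exact h2.deriv

lemma Pf_even : Pf p q (-ζ) = Pf p q ζ := by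
  unfold Pf; rw [show (-ζ)^2 = ζ^2 by ring]

lemma ψf_Tf (hp0 : 0 < p) (hq0 : 0 < q) (hpq : p*q = p+q) (ζ : ℝ) :
    ψf p q (Tf p q ζ) = Pf p q ζ := by
  unfold ψf; rw [gf_Tf hp0 hq0 hpq]

lemma Tf_sq' (hp0 : 0 < p) (hq0 : 0 < q) :
    (Tf p q ζ)^2 * (((ζ^2+p+1)^(1/(2*p)))^2 * ((ζ^2+q+1)^(1/(2*q)))^2) = ζ^2 := by
  have hA := A_pos (ζ := ζ) hp0
  have hB := A_pos (ζ := ζ) hq0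
  have hxA : (0:ℝ) < (ζ^2+p+1) ^ (1/(2*p)) := Real.rpow_pos_of_pos hA _
  have hyB : (0:ℝ) < (ζ^2+q+1) ^ (1/(2*q)) := Real.rpow_pos_of_pos hB _
  unfold Tf
  rw [show (-1/(2*p)) = -(1/(2*p)) by ring, show (-1/(2*q)) = -(1/(2*q)) by ring,
    Real.rpow_neg hA.le, Real.rpow_neg hB.le]
  field_simp

lemma Tf_mul_Df (hp0 : 0 < p) (hq0 : 0 < q) :
    Tf p q ζ * Df p q ζ = ζ^2 := by
  have hA := A_pos (ζ := ζ) hp0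
  have hB := A_pos (ζ := ζ) hq0
  have hxA : (0:ℝ) < (ζ^2+p+1) ^ (1/(2*p)) := Real.rpow_pos_of_pos hA _
  have hyB : (0:ℝ) < (ζ^2+q+1) ^ (1/(2*q)) := Real.rpow_pos_of_pos hB _
  unfold Tf Df
  rw [show (-1/(2*p)) = -(1/(2*p)) by ring, show (-1/(2*q)) = -(1/(2*q)) by ring,
    Real.rpow_neg hA.le, Real.rpow_neg hB.le]
  field_simp

lemma pq_exp (hp0 : 0 < p) (hq0 : 0 < q) :
    (p+q) * Real.exp (2 * Pf p q ζ)
      = ((ζ^2+p+1)^(1/(2*p)))^2 * ((ζ^2+q+1)^(1/(2*q)))^2 * (ζ^2+p+1) * (ζ^2+q+1) := by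
  have hA := A_pos (ζ := ζ) hp0
  have hB := A_pos (ζ := ζ) hq0
  have hstep : 2 * Pf p q ζ = Real.log (ζ^2+p+1) * ((p+1)/p)
      + Real.log (ζ^2+q+1) * ((q+1)/q) - Real.log (p+q) := by
    unfold Pf; field_simp; ring
  rw [hstep, Real.exp_sub, Real.exp_add, Real.exp_log (by positivity),
    ← Real.rpow_def_of_pos hA, ← Real.rpow_def_of_pos hB]
  have eA : (ζ^2+p+1) ^ ((p+1)/p) = ((ζ^2+p+1)^(1/(2*p)))^2 * (ζ^2+p+1) := by
    have h2 : ((p+1)/p : ℝ) = 1/(2*p)*((2:ℕ):ℝ) + 1 := by push_cast; field_simp; ring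
    rw [h2, Real.rpow_add hA, Real.rpow_one, Real.rpow_mul hA.le, Real.rpow_natCast]
  have eB : (ζ^2+q+1) ^ ((q+1)/q) = ((ζ^2+q+1)^(1/(2*q)))^2 * (ζ^2+q+1) := by
    have h2 : ((q+1)/q : ℝ) = 1/(2*q)*((2:ℕ):ℝ) + 1 := by push_cast; field_simp; ring
    rw [h2, Real.rpow_add hB, Real.rpow_one, Real.rpow_mul hB.le, Real.rpow_natCast]
  rw [eA, eB]
  field_simp

lemma c_key (hp0 : 0 < p) (hq0 : 0 < q) :
    (p+q) * (Tf p q ζ)^2 * Real.exp (2 * Pf p q ζ)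
      = (Tf p q ζ * Df p q ζ) * (Tf p q ζ * Df p q ζ + p + 1)
        * (Tf p q ζ * Df p q ζ + q + 1) := by
  have h1 := Tf_mul_Df (ζ := ζ) hp0 hq0
  have h2 := Tf_sq' (ζ := ζ) hp0 hq0
  have h3 := pq_exp (ζ := ζ) hp0 hq0
  rw [h1]
  linear_combination (Tf p q ζ)^2 * h3 + ((ζ^2+p+1) * (ζ^2+q+1)) * h2

lemma key_d (hp0 : 0 < p) (hq0 : 0 < q) (hpq : p*q = p+q) :
    (2 - Vf p q ζ) * (2*(p+q) + 1 + 3*ζ^2)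
      = Vf p q ζ * ((ζ^2+p+1)*(ζ^2+q+1) + ζ^2*(p+q-1+ζ^2)) := by
  have hA := A_pos (ζ := ζ) hp0
  have hB := A_pos (ζ := ζ) hq0
  unfold Vf
  field_simp
  linear_combination (3*p^2*q + 2*p^2*ζ^2 + 3*p^2 + 3*p*q^2 + 8*p*q*ζ^2 + 8*p*q
    + 4*p*ζ^4 + 9*p*ζ^2 + 5*p + 2*q^2*ζ^2 + 3*q^2 + 4*q*ζ^4 + 9*q*ζ^2 + 5*q
    + 2*ζ^6 + 6*ζ^4 + 6*ζ^2 + 2) * hpq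

lemma Td_inv (hp0 : 0 < p) (hq0 : 0 < q) :
    (Td p q ζ)⁻¹ = (ζ^2+p+1)^(1/(2*p)) * (ζ^2+q+1)^(1/(2*q)) / Vf p q ζ := by
  have hA := A_pos (ζ := ζ) hp0
  have hB := A_pos (ζ := ζ) hq0
  have hV := Vf_pos (ζ := ζ) hp0 hq0
  have hxA : (0:ℝ) < (ζ^2+p+1) ^ (1/(2*p)) := Real.rpow_pos_of_pos hA _
  have hyB : (0:ℝ) < (ζ^2+q+1) ^ (1/(2*q)) := Real.rpow_pos_of_pos hB _
  unfold Td
  rw [show (-1/(2*p)) = -(1/(2*p)) by ring, show (-1/(2*q)) = -(1/(2*q)) by ring,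
    Real.rpow_neg hA.le, Real.rpow_neg hB.le]
  rw [mul_inv, mul_inv, inv_inv, inv_inv]
  ring

lemma d_key (hp0 : 0 < p) (hq0 : 0 < q) (hpq : p*q = p+q) :
    ((ζ^2+p+1)^(1/(2*p)) * (ζ^2+q+1)^(1/(2*q)) * (2 - Vf p q ζ) * (Td p q ζ)⁻¹)
        * (2*(p+q) + 1 + 3*ζ^2)
      - (Df p q ζ)^2 * (p+q-1+ζ^2) = (p+q) * Real.exp (2 * Pf p q ζ) := by
  have hV := Vf_pos (ζ := ζ) hp0 hq0
  have hk := key_d (ζ := ζ) hp0 hq0 hpq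
  rw [Td_inv hp0 hq0, pq_exp hp0 hq0]
  unfold Df
  field_simp
  linear_combination hk

lemma tendsto_Pf_atTop (hp0 : 0 < p) (hq0 : 0 < q) :
    Tendsto (fun ζ => Pf p q ζ) atTop atTop := by
  have hsq : Tendsto (fun ζ : ℝ => ζ^2) atTop atTop := tendsto_pow_atTop two_ne_zero
  have hA : Tendsto (fun ζ : ℝ => ζ^2+p+1) atTop atTop :=
    tendsto_atTop_add_const_right _ 1 (tendsto_atTop_add_const_right _ p hsq)
  have hB : Tendsto (fun ζ : ℝ => ζ^2+q+1) atTop atTop :=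
    tendsto_atTop_add_const_right _ 1 (tendsto_atTop_add_const_right _ q hsq)
  have l1 : Tendsto (fun ζ : ℝ => ((p+1)/(2*p)) * Real.log (ζ^2+p+1)) atTop atTop :=
    (Real.tendsto_log_atTop.comp hA).const_mul_atTop (by positivity)
  have l2 : Tendsto (fun ζ : ℝ => ((q+1)/(2*q)) * Real.log (ζ^2+q+1)) atTop atTop :=
    (Real.tendsto_log_atTop.comp hB).const_mul_atTop (by positivity)
  unfold Pf
  exact Filter.Tendsto.atTop_add_atTop (tendsto_atTop_add_const_left _ _ l1) l2

lemma tendsto_Pf_atBot (hp0 : 0 < p) (hq0 : 0 < q) :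
    Tendsto (fun ζ => Pf p q ζ) atBot atTop := by
  have h := (tendsto_Pf_atTop hp0 hq0).comp tendsto_neg_atBot_atTop
  refine Tendsto.congr ?_ h
  intro ζ
  exact Pf_even

lemma tendsto_gf_one (hp0 : 0 < p) (hq0 : 0 < q) (hpq : p*q = p+q) :
    Tendsto (gf p q) (nhdsWithin 1 (Set.Ioo (-1:ℝ) 1)) atTop := by
  have hmono := strictMono_Tf hp0 hq0 hpq
  rw [tendsto_atTop]
  intro M
  have hTM := Tf_mem_Ioo (ζ := M) hp0 hq0 hpq
  have h1 : Set.Ioi (Tf p q M) ∈ nhds (1:ℝ) := Ioi_mem_nhds hTM.2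
  filter_upwards [nhdsWithin_le_nhds h1, self_mem_nhdsWithin] with s hs1 hs2
  obtain ⟨ζ', hζ'⟩ : s ∈ Set.range (fun ζ => Tf p q ζ) := by
    rw [range_Tf hp0 hq0 hpq]; exact hs2
  replace hζ' : Tf p q ζ' = s := hζ'
  have : M < ζ' := hmono.lt_iff_lt.mp (show Tf p q M < Tf p q ζ' by rw [hζ']; exact hs1)
  rw [← hζ', gf_Tf hp0 hq0 hpq]
  exact this.le

lemma tendsto_gf_negone (hp0 : 0 < p) (hq0 : 0 < q) (hpq : p*q = p+q) :
    Tendsto (gf p q) (nhdsWithin (-1) (Set.Ioo (-1:ℝ) 1)) atBot := by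
  have hmono := strictMono_Tf hp0 hq0 hpq
  rw [tendsto_atBot]
  intro M
  have hTM := Tf_mem_Ioo (ζ := M) hp0 hq0 hpq
  have h1 : Set.Iio (Tf p q M) ∈ nhds (-1:ℝ) := Iio_mem_nhds hTM.1
  filter_upwards [nhdsWithin_le_nhds h1, self_mem_nhdsWithin] with s hs1 hs2
  obtain ⟨ζ', hζ'⟩ : s ∈ Set.range (fun ζ => Tf p q ζ) := by
    rw [range_Tf hp0 hq0 hpq]; exact hs2
  replace hζ' : Tf p q ζ' = s := hζ'
  have : ζ' < M := hmono.lt_iff_lt.mp (show Tf p q ζ' < Tf p q M by rw [hζ']; exact hs1)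
  rw [← hζ', gf_Tf hp0 hq0 hpq]
  exact this.le

lemma tendsto_ψf_one (hp0 : 0 < p) (hq0 : 0 < q) (hpq : p*q = p+q) :
    Tendsto (ψf p q) (nhdsWithin 1 (Set.Ioo (-1:ℝ) 1)) atTop :=
  (tendsto_Pf_atTop hp0 hq0).comp (tendsto_gf_one hp0 hq0 hpq)

lemma tendsto_ψf_negone (hp0 : 0 < p) (hq0 : 0 < q) (hpq : p*q = p+q) :
    Tendsto (ψf p q) (nhdsWithin (-1) (Set.Ioo (-1:ℝ) 1)) atTop :=
  (tendsto_Pf_atBot hp0 hq0).comp (tendsto_gf_negone hp0 hq0 hpq)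

end PCAux

open PCAux

/-- the c = 0 solution of the reduced Monge–Ampère equation for the power
cone K⁴_{p,1}, given parametrically by
t(ζ) = (ζ²+p+1)^{−1/(2p)} (ζ²+q+1)^{−1/(2q)} ζ and
φ̂(ζ) = −(1/2)log(p+q) + ((p+1)/(2p))log(ζ²+p+1) + ((q+1)/(2q))log(ζ²+q+1). -/
theorem power_cone_canonical_solution (p q : ℝ) (hp : 2 ≤ p) (hq : q = p / (p - 1)) :
    let T : ℝ → ℝ := fun ζ =>
      (ζ^2 + p + 1) ^ (-1/(2*p)) * (ζ^2 + q + 1) ^ (-1/(2*q)) * ζ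
    let Φ : ℝ → ℝ := fun ζ => -(1/2) * Real.log (p + q)
      + ((p+1)/(2*p)) * Real.log (ζ^2 + p + 1) + ((q+1)/(2*q)) * Real.log (ζ^2 + q + 1)
    StrictMono T ∧ ContDiff ℝ (⊤ : ℕ∞) T ∧ Set.range T = Set.Ioo (-1) 1 ∧
    ∃ ψ : ℝ → ℝ,
      (∀ ζ : ℝ, ψ (T ζ) = Φ ζ) ∧
      -- (a) ψ is even on (−1,1)
      (∀ s ∈ Set.Ioo (-1 : ℝ) 1, ψ (-s) = ψ s) ∧
      -- (b) s·ψ'(s) = ζ² at s = t(ζ)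
      (∀ ζ : ℝ, T ζ * deriv ψ (T ζ) = ζ^2) ∧
      -- (c)
      (∀ s ∈ Set.Ioo (-1 : ℝ) 1,
        (p+q) * s^2 * Real.exp (2 * ψ s)
          = (s * deriv ψ s) * (s * deriv ψ s + p + 1) * (s * deriv ψ s + q + 1)) ∧
      -- (d)
      (∀ s ∈ Set.Ioo (-1 : ℝ) 1,
        deriv (deriv ψ) s * (2*(p+q) + 1 + 3 * s * deriv ψ s)
          - (deriv ψ s)^2 * (p + q - 1 + s * deriv ψ s) = (p+q) * Real.exp (2 * ψ s)) ∧
      -- (e)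
      Filter.Tendsto ψ (nhdsWithin 1 (Set.Ioo (-1 : ℝ) 1)) Filter.atTop ∧
      Filter.Tendsto ψ (nhdsWithin (-1) (Set.Ioo (-1 : ℝ) 1)) Filter.atTop := by
  intro T Φ
  have hp0 : 0 < p := by linarith
  have hq0 : 0 < q := by rw [hq]; exact div_pos hp0 (by linarith)
  have hpq : p * q = p + q := by
    have h1 : p - 1 ≠ 0 := by linarith
    rw [hq]; field_simp; ring
  have hT : T = fun ζ => Tf p q ζ := rfl
  have hΦ : Φ = fun ζ => Pf p q ζ := rfl
  refine ⟨?_, ?_, ?_, ψf p q, ?_, ?_, ?_, ?_, ?_, ?_, ?_⟩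
  · rw [hT]; exact strictMono_Tf hp0 hq0 hpq
  · rw [hT]; exact contDiff_Tf hp0 hq0
  · rw [hT]; exact range_Tf hp0 hq0 hpq
  · intro ζ
    exact ψf_Tf hp0 hq0 hpq ζ
  · intro s hs
    obtain ⟨ζ, hζ⟩ : s ∈ Set.range (fun ζ => Tf p q ζ) := by
      rw [range_Tf hp0 hq0 hpq]; exact hs
    replace hζ : Tf p q ζ = s := hζ
    subst hζ
    rw [show -Tf p q ζ = Tf p q (-ζ) by rw [Tf_neg]]
    rw [ψf_Tf hp0 hq0 hpq, ψf_Tf hp0 hq0 hpq, Pf_even]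
  · intro ζ
    show Tf p q ζ * deriv (ψf p q) (Tf p q ζ) = ζ^2
    rw [deriv_ψf hp0 hq0 hpq]
    exact Tf_mul_Df hp0 hq0
  · intro s hs
    obtain ⟨ζ, hζ⟩ : s ∈ Set.range (fun ζ => Tf p q ζ) := by
      rw [range_Tf hp0 hq0 hpq]; exact hs
    replace hζ : Tf p q ζ = s := hζ
    subst hζ
    show (p+q) * (Tf p q ζ)^2 * Real.exp (2 * ψf p q (Tf p q ζ)) = _
    rw [ψf_Tf hp0 hq0 hpq, deriv_ψf hp0 hq0 hpq]
    exact c_key hp0 hq0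
  · intro s hs
    obtain ⟨ζ, hζ⟩ : s ∈ Set.range (fun ζ => Tf p q ζ) := by
      rw [range_Tf hp0 hq0 hpq]; exact hs
    replace hζ : Tf p q ζ = s := hζ
    subst hζ
    rw [ψf_Tf hp0 hq0 hpq, deriv_ψf hp0 hq0 hpq, deriv2_ψf hp0 hq0 hpq]
    have hb := Tf_mul_Df (ζ := ζ) hp0 hq0
    have hd := d_key (ζ := ζ) hp0 hq0 hpq
    linear_combination hd + (3 * ((ζ^2+p+1)^(1/(2*p)) * (ζ^2+q+1)^(1/(2*q))
      * (2 - Vf p q ζ) * (Td p q ζ)⁻¹) - (Df p q ζ)^2) * hb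
  · exact tendsto_ψf_one hp0 hq0 hpq
  · exact tendsto_ψf_negone hp0 hq0 hpq
end
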